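/- arXiv:2303.02686 — 7 statements merged into one kernel-verified Lean document; each statement's English description precedes it below -/
import Mathlib

section
/- For an admissible state U with velocity |u| < 1 and sound speed 0 < c_s < 1 with c_s² < Γ - 1, the extreme eigenvalues λ_i^{(1)} = (u_i(1-c_s²) - c_s γ^{-1} sqrt(1 - u_i² - c_s²(|u|² - u_i²)))/(1 - c_s²|u|²) and λ_i^{(4)} = (u_i(1-c_s²) + c_s γ^{-1} sqrt(1 - u_i² - c_s²(|u|² - u_i²)))/(1 - c_s²|u|²) are real and satisfy -1 < λ_i^{(1)} < u_i < λ_i^{(4)} < 1, where γ = 1/sqrt(1-|u|²). -/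
lemma eigenvalue_bounds_aux (s cs v : ℝ) (hv : v ^ 2 ≤ s) (hs1 : s < 1)
    (hcs0 : 0 < cs) (hcs1 : cs < 1) :
    v < (v * (1 - cs ^ 2) +
        cs * Real.sqrt (1 - s) * Real.sqrt (1 - v ^ 2 - cs ^ 2 * (s - v ^ 2))) /
        (1 - cs ^ 2 * s) ∧
    (v * (1 - cs ^ 2) +
        cs * Real.sqrt (1 - s) * Real.sqrt (1 - v ^ 2 - cs ^ 2 * (s - v ^ 2))) /
        (1 - cs ^ 2 * s) < 1 := by
  have hs0 : 0 ≤ s := le_trans (sq_nonneg v) hv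
  have hc2 : cs ^ 2 < 1 := by nlinarith
  have hv1 : v < 1 := by nlinarith
  have hD : 0 < 1 - cs ^ 2 * s := by nlinarith
  have hw2 : Real.sqrt (1 - s) ^ 2 = 1 - s := Real.sq_sqrt (by linarith)
  have hw : 0 < Real.sqrt (1 - s) := Real.sqrt_pos.2 (by linarith)
  set w := Real.sqrt (1 - s) with hwdef
  have hA : 0 < 1 - v ^ 2 - cs ^ 2 * (s - v ^ 2) := by nlinarith
  have hr2 : Real.sqrt (1 - v ^ 2 - cs ^ 2 * (s - v ^ 2)) ^ 2
      = 1 - v ^ 2 - cs ^ 2 * (s - v ^ 2) := Real.sq_sqrt hA.le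
  have hr : 0 < Real.sqrt (1 - v ^ 2 - cs ^ 2 * (s - v ^ 2)) := Real.sqrt_pos.2 hA
  set r := Real.sqrt (1 - v ^ 2 - cs ^ 2 * (s - v ^ 2)) with hrdef
  have key : v * cs * w < r := by
    by_contra h
    push_neg at h
    have h2 : r ^ 2 ≤ (v * cs * w) ^ 2 := by
      have := mul_le_mul h h hr.le (le_trans hr.le h)
      nlinarith
    nlinarith [mul_pos (show (0:ℝ) < 1 - v ^ 2 by nlinarith) hD]
  have hP : 0 < (1 - v) - cs ^ 2 * (s - v) := by nlinarith
  have key2 : cs * w * r < (1 - v) - cs ^ 2 * (s - v) := by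
    by_contra h
    push_neg at h
    have hcwr : 0 < cs * w * r := by positivity
    have h2 : ((1 - v) - cs ^ 2 * (s - v)) ^ 2 ≤ (cs * w * r) ^ 2 := by
      nlinarith
    have hwr : (cs * w * r) ^ 2 = cs ^ 2 * (1 - s) * (1 - v ^ 2 - cs ^ 2 * (s - v ^ 2)) := by
      rw [mul_pow, mul_pow, hw2, hr2]
    nlinarith [h2, hwr, mul_pos (mul_pos (mul_pos (show (0:ℝ) < 1 - v by linarith)
      (show (0:ℝ) < 1 - v by linarith)) (show (0:ℝ) < 1 - cs ^ 2 by linarith)) hD]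
  constructor
  · rw [lt_div_iff₀ hD]
    nlinarith [mul_pos (mul_pos hcs0 hw) (show (0:ℝ) < r - v * cs * w by linarith)]
  · rw [div_lt_one hD]
    nlinarith

/-- For `|u| < 1` and sound speed `0 < c_s < 1` with `c_s² < Γ - 1`, the extreme
eigenvalues `λ_i^{(1)}`, `λ_i^{(4)}` of the flux Jacobian in direction `i`
satisfy `-1 < λ_i^{(1)} < u_i < λ_i^{(4)} < 1`, where `γ = 1/√(1-|u|²)`. -/
theorem eigenvalue_bounds (Γ u1 u2 cs ui γ lam1 lam4 : ℝ)
    (hu : u1 ^ 2 + u2 ^ 2 < 1) (hcs0 : 0 < cs) (hcs1 : cs < 1)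
    (hcsΓ : cs ^ 2 < Γ - 1)
    (hγ : γ = 1 / Real.sqrt (1 - (u1 ^ 2 + u2 ^ 2)))
    (hi : ui = u1 ∨ ui = u2)
    (hlam1 : lam1 = (ui * (1 - cs ^ 2) -
        cs / γ * Real.sqrt (1 - ui ^ 2 - cs ^ 2 * ((u1 ^ 2 + u2 ^ 2) - ui ^ 2))) /
        (1 - cs ^ 2 * (u1 ^ 2 + u2 ^ 2)))
    (hlam4 : lam4 = (ui * (1 - cs ^ 2) +
        cs / γ * Real.sqrt (1 - ui ^ 2 - cs ^ 2 * ((u1 ^ 2 + u2 ^ 2) - ui ^ 2))) /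
        (1 - cs ^ 2 * (u1 ^ 2 + u2 ^ 2))) :
    -1 < lam1 ∧ lam1 < ui ∧ ui < lam4 ∧ lam4 < 1 := by
  set s := u1 ^ 2 + u2 ^ 2 with hsdef
  have hv : ui ^ 2 ≤ s := by
    rw [hsdef]
    rcases hi with h | h <;> rw [h] <;> nlinarith [sq_nonneg u1, sq_nonneg u2]
  have hw : 0 < Real.sqrt (1 - s) := Real.sqrt_pos.2 (by linarith)
  have hcsγ : cs / γ = cs * Real.sqrt (1 - s) := by
    rw [hγ]
    field_simp
  have h4 := eigenvalue_bounds_aux s cs ui hv hu hcs0 hcs1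
  have harg : (1 - (-ui) ^ 2 - cs ^ 2 * (s - (-ui) ^ 2))
      = 1 - ui ^ 2 - cs ^ 2 * (s - ui ^ 2) := by ring
  have h1 := eigenvalue_bounds_aux s cs (-ui) (by nlinarith) hu hcs0 hcs1
  rw [harg] at h1
  have hlam1' : -lam1 = (-ui * (1 - cs ^ 2) +
      cs * Real.sqrt (1 - s) * Real.sqrt (1 - ui ^ 2 - cs ^ 2 * (s - ui ^ 2))) /
      (1 - cs ^ 2 * s) := by
    rw [hlam1, hcsγ]
    ring
  rw [hcsγ] at hlam4
  rw [← hlam1'] at h1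
  rw [← hlam4] at h4
  exact ⟨by linarith [h1.2], by linarith [h1.1], h4.1, h4.2⟩
end

section
/- Let U = (D, m, E) ∈ G with flux F_i(U) as in 2D special RHD with perfect-gas EOS, Γ ∈ (1,2]. If β ≤ λ_i^{(1)}(U), then -βU + F_i(U) ∈ G. -/
set_option maxHeartbeats 1000000

lemma pos_of_mul_pos'' (x y : ℝ) (hy : 0 < y) (hxy : 0 < x * y) : 0 < x := by
  nlinarith

lemma aux_pos_of_sq_lt (x y : ℝ) (hx : 0 < x) (hxy : y^2 < x^2) : 0 < x + y := by
  nlinarith [sq_nonneg (x+y)]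

lemma aux_rhd (Γ ρ p b uo γ h c D mi mo E lam1 β : ℝ)
    (hΓ1 : 1 < Γ) (hΓ2 : Γ ≤ 2) (hρ : 0 < ρ) (hp : 0 < p)
    (hu : b ^ 2 + uo ^ 2 < 1)
    (hγ : γ = 1 / Real.sqrt (1 - (b ^ 2 + uo ^ 2)))
    (hh : h = 1 + p / ((Γ - 1) * ρ) + p / ρ)
    (hcs : c = Real.sqrt (Γ * p / (ρ * h)))
    (hD : D = ρ * γ) (hmi : mi = ρ * h * γ ^ 2 * b) (hmo : mo = ρ * h * γ ^ 2 * uo)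
    (hE : E = ρ * h * γ ^ 2 - p)
    (hlam1 : lam1 = (b * (1 - c ^ 2) -
        c / γ * Real.sqrt (1 - b ^ 2 - c ^ 2 * ((b ^ 2 + uo ^ 2) - b ^ 2))) /
        (1 - c ^ 2 * (b ^ 2 + uo ^ 2)))
    (hβ : β ≤ lam1) :
    -β * D + D * b > 0 ∧ -β * E + (E + p) * b > 0 ∧
      (-β * E + (E + p) * b) ^ 2 - (-β * D + D * b) ^ 2 -
        ((-β * mi + (mi * b + p)) ^ 2 + (-β * mo + mo * b) ^ 2) > 0 := by
  have hΓ1' : (0:ℝ) < Γ - 1 := by linarith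
  have hb2 : b^2 ≤ b^2 + uo^2 := by nlinarith [sq_nonneg uo]
  have hb1 : b^2 < 1 := lt_of_le_of_lt hb2 hu
  have hv2nn : (0:ℝ) ≤ b^2 + uo^2 := by positivity
  -- g
  have hg2' : (0:ℝ) < 1 - (b^2 + uo^2) := by linarith
  set g := Real.sqrt (1 - (b^2 + uo^2)) with hgdef
  have hg : 0 < g := Real.sqrt_pos.mpr hg2'
  have hg2 : g^2 = 1 - (b^2 + uo^2) := Real.sq_sqrt hg2'.le
  have hgle : g ≤ 1 := by nlinarith
  have hγg : γ * g = 1 := by rw [hγ]; field_simp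
  have huo2 : uo^2 = 1 - g^2 - b^2 := by rw [hg2]; ring
  -- π
  set π := p / (Γ - 1) with hπdef
  have hπpos : 0 < π := by positivity
  have hpπ : p = (Γ - 1) * π := by rw [hπdef]; field_simp
  -- H
  set H := ρ * h with hHdef
  have hHval : H = ρ + π + p := by rw [hHdef, hh, hπdef]; field_simp
  have hHpos : 0 < H := by rw [hHval]; positivity
  have hΓsq : (Γ - 1)^2 ≤ 1 := by nlinarith
  have hΓp : (Γ - 1) * p ≤ π := by
    rw [hpπ, show (Γ-1)*((Γ-1)*π) = (Γ-1)^2*π from by ring]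
    exact mul_le_of_le_one_left hπpos.le hΓsq
  have hHgp : Γ * p < H := by rw [hHval]; linarith
  have hHp : p < H := by nlinarith [mul_pos hΓ1' hp]
  -- c
  have hΓpH : 0 < Γ * p / H := div_pos (by positivity) hHpos
  have hc2 : c^2 = Γ * p / H := by
    rw [hcs, Real.sq_sqrt hΓpH.le]
  have hcpos : 0 < c := by
    rw [hcs]; exact Real.sqrt_pos.mpr hΓpH
  have hcsq : c^2 * H = Γ * p := by rw [hc2]; field_simp
  have hc1 : c^2 < 1 := by rw [hc2, div_lt_one hHpos]; exact hHgp
  have hK : 0 < 1 - c^2 * (b^2 + uo^2) := by nlinarith [sq_nonneg c]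
  have hKne : (1 - c^2*(b^2+uo^2)) ≠ 0 := ne_of_gt hK
  have hT : (0:ℝ) < 1 - b^2 - c^2*((b^2+uo^2) - b^2) := by
    nlinarith [mul_nonneg (sub_nonneg.mpr hb2) (sub_pos.mpr hc1).le]
  set S := Real.sqrt (1 - b^2 - c^2*((b^2+uo^2) - b^2)) with hSdef
  have hS : 0 < S := Real.sqrt_pos.mpr hT
  have hS2 : S^2 = 1 - b^2 - c^2*((b^2+uo^2) - b^2) := Real.sq_sqrt hT.le
  have hlamid : b - lam1 = c*g*(b*c*g + S) / (1 - c^2*(b^2+uo^2)) := by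
    rw [hlam1, hγ]
    field_simp
    linear_combination (-(b*c^2)) * hg2
  -- s0 positivity
  have hγpos : 0 < γ := by rw [hγ]; positivity
  have hbg2 : (b*c*g)^2 = b^2*c^2*(1-(b^2+uo^2)) := by rw [mul_pow, mul_pow, hg2]
  have hSbcg : (b*c*g)^2 < S^2 := by
    have key : S^2 - (b*c*g)^2 = (1-b^2)*(1-c^2*(b^2+uo^2)) := by
      linear_combination hS2 - hbg2
    linarith [key, mul_pos (show (0:ℝ) < 1-b^2 by linarith) hK]
  have hbcgS : 0 < b*c*g + S := by
    have habs : |b*c*g| < S := by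
      refine lt_of_pow_lt_pow_left₀ 2 hS.le ?_
      rw [sq_abs]; exact hSbcg
    have := neg_abs_le (b*c*g); linarith
  have hs0pos : 0 < c*g*(b*c*g+S) / (1 - c^2*(b^2+uo^2)) :=
    div_pos (mul_pos (mul_pos hcpos hg) hbcgS) hK
  have hsge : c*g*(b*c*g+S) / (1 - c^2*(b^2+uo^2)) ≤ b - β := by
    rw [← hlamid]; linarith
  have hspos : 0 < b - β := lt_of_lt_of_le hs0pos hsge
  -- E
  have hgsq1 : g^2 ≤ 1 := by linarith [hg2]
  have hEg : E*g^2 = H - p*g^2 := by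
    rw [hE]; linear_combination (H*(γ*g+1)) * hγg
  have hHpg : 0 < H - p*g^2 := by linarith [mul_le_of_le_one_right hp.le hgsq1]
  have hEpos : 0 < E := pos_of_mul_pos'' E (g^2) (pow_pos hg 2) (by rw [hEg]; exact hHpg)
  -- key scalar inequality c*(H-p) > p
  have hΓ0 : (0:ℝ) < Γ := by linarith
  have k1 : 0 < Γ*p*(H-p)^2 - H*p^2 := by
    rw [hHval, hpπ]
    have t1 : 0 < (Γ-1)*π*(Γ*ρ^2) :=
      mul_pos (mul_pos hΓ1' hπpos) (mul_pos hΓ0 (pow_pos hρ 2))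
    have t2 : 0 < (Γ-1)*π*((Γ+1)*(ρ*π)) :=
      mul_pos (mul_pos hΓ1' hπpos)
        (mul_pos (by linarith) (mul_pos hρ hπpos))
    have t3 : 0 ≤ (Γ-1)*π*((2-Γ)*(Γ*π^2)) :=
      mul_nonneg (mul_nonneg hΓ1'.le hπpos.le)
        (mul_nonneg (by linarith) (by positivity))
    linarith [t1, t2, t3]
  have e5 : c^2*(H-p)^2*H = Γ*p*(H-p)^2 := by linear_combination (H-p)^2 * hcsq
  have hc2X : p^2 < c^2*(H-p)^2 := by
    have e6 : (c^2*(H-p)^2 - p^2)*H = Γ*p*(H-p)^2 - H*p^2 := by linear_combination e5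
    have := pos_of_mul_pos'' (c^2*(H-p)^2 - p^2) H hHpos (by rw [e6]; exact k1)
    linarith
  -- the big squared inequality for component 2
  have step3 : 0 < c^2*(H-p)^2 - p^2*(b^2+uo^2) := by
    linarith [hc2X, mul_nonneg (sq_nonneg p) hg2'.le]
  have A1 : c^2*(H-p*g^2)^2*S^2 - b^2*g^2*(c^2*H + p*(1-c^2))^2
      = g^2*((c^2*(H-p)^2 - p^2*(b^2+uo^2))*(1 - c^2*(b^2+uo^2)))
        + ((b^2+uo^2)-b^2)*(c^2*(H-p*g^2)^2*(1-c^2) + g^2*(c^2*H + p*(1-c^2))^2) := by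
    linear_combination (c^2*H^2 - 2*c^2*g^2*H*p + c^2*g^4*p^2)*hS2
      + (-(c^2*H^2) + c^2*g^2*p^2 - uo^2*c^2*g^2*p^2 - b^2*c^2*g^2*p^2)*hg2
  have hbig : (b*g*(c^2*H + p*(1-c^2)))^2 < (c*(H-p*g^2)*S)^2 := by
    have h1 : 0 < g^2*((c^2*(H-p)^2 - p^2*(b^2+uo^2))*(1 - c^2*(b^2+uo^2))) :=
      mul_pos (pow_pos hg 2) (mul_pos step3 hK)
    have h2 : 0 ≤ ((b^2+uo^2)-b^2)*(c^2*(H-p*g^2)^2*(1-c^2) + g^2*(c^2*H + p*(1-c^2))^2) :=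
      mul_nonneg (by linarith)
        (add_nonneg (mul_nonneg (mul_nonneg (sq_nonneg c) (sq_nonneg (H-p*g^2))) (by linarith))
          (mul_nonneg (sq_nonneg g) (sq_nonneg (c^2*H + p*(1-c^2)))))
    linarith [A1, h1, h2]
  have hNpos : 0 < c*(H-p*g^2)*S + b*g*(c^2*H + p*(1-c^2)) := by
    refine aux_pos_of_sq_lt _ _ (mul_pos (mul_pos hcpos hHpg) hS) hbig
  -- misc positivity
  have hDpos : 0 < D := by rw [hD]; exact mul_pos hρ hγpos
  have hsKu : c*g*(b*c*g+S) ≤ (b-β)*(1-c^2*(b^2+uo^2)) := (div_le_iff₀ hK).mp hsge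
  have hupos : 0 < c*g*(b*c*g+S) := mul_pos (mul_pos hcpos hg) hbcgS
  -- component 2
  have hNid : (E*(c*g*(b*c*g+S)) + p*b*(1-c^2*(b^2+uo^2)))*g
      = c*(H-p*g^2)*S + b*g*(c^2*H + p*(1-c^2)) := by
    linear_combination (c*S + b*c^2*g)*hEg + (-(b*c^2*g*p))*hg2
  have hEu : 0 < E*(c*g*(b*c*g+S)) + p*b*(1-c^2*(b^2+uo^2)) :=
    pos_of_mul_pos'' _ g hg (by rw [hNid]; exact hNpos)
  have hcomp2 : 0 < E*(b-β) + p*b := by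
    refine pos_of_mul_pos'' _ _ hK ?_
    have P := mul_nonneg hEpos.le (sub_nonneg.mpr hsKu)
    linarith [hEu, P]
  -- component 3
  have W_id : ((H^2 - 2*H*p - ρ^2 + p^2*g^2)*(c*g*(b*c*g+S))^2
      - g^2*p^2*(2*b*(c*g*(b*c*g+S))*(1-c^2*(b^2+uo^2)) + (1-b^2)*(1-c^2*(b^2+uo^2))^2))*c^2
      = ((H^2 - 2*H*p - ρ^2 + p^2*g^2)*c^2 - p^2*(1-c^2*(b^2+uo^2)))*(c*g*(b*c*g+S))^2 := by
    linear_combination (c^2*g^2*p^2 - uo^2*c^4*g^2*p^2 - b^2*c^4*g^2*p^2)*hS2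
      + (-(b^2*c^4*g^2*p^2) + b^2*uo^2*c^6*g^2*p^2 + b^4*c^6*g^2*p^2)*hg2
  have hM2 : ((H^2 - 2*H*p - ρ^2 + p^2*g^2)*c^2 - p^2*(1-c^2*(b^2+uo^2)))*H
      = Γ*p*((H-p)^2 - ρ^2) - p^2*H := by
    linear_combination (-ρ^2 - 2*H*p + H^2 + g^2*p^2 + uo^2*p^2 + b^2*p^2)*hcsq + (p^3*Γ)*hg2
  have hM3 : 0 < Γ*p*((H-p)^2 - ρ^2) - p^2*H := by
    rw [hHval, hpπ]
    have t2 : 0 < (Γ-1)*π*((Γ+1)*(ρ*π)) :=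
      mul_pos (mul_pos hΓ1' hπpos) (mul_pos (by linarith) (mul_pos hρ hπpos))
    have t3 : 0 ≤ (Γ-1)*π*((2-Γ)*(Γ*π^2)) :=
      mul_nonneg (mul_nonneg hΓ1'.le hπpos.le)
        (mul_nonneg (by linarith) (by positivity))
    linarith [t2, t3]
  have hMpos : 0 < (H^2 - 2*H*p - ρ^2 + p^2*g^2)*c^2 - p^2*(1-c^2*(b^2+uo^2)) :=
    pos_of_mul_pos'' _ H hHpos (by rw [hM2]; exact hM3)
  have hAg : 0 < H^2 - 2*H*p - ρ^2 + p^2*g^2 := by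
    refine pos_of_mul_pos'' _ (c^2) (pow_pos hcpos 2) ?_
    linarith [hMpos, mul_pos (pow_pos hp 2) hK]
  have hW : 0 < (H^2-2*H*p-ρ^2+p^2*g^2)*(c*g*(b*c*g+S))^2
      - g^2*p^2*(2*b*(c*g*(b*c*g+S))*(1-c^2*(b^2+uo^2)) + (1-b^2)*(1-c^2*(b^2+uo^2))^2) := by
    refine pos_of_mul_pos'' _ (c^2) (pow_pos hcpos 2) ?_
    rw [W_id]
    exact mul_pos hMpos (pow_pos hupos 2)
  have h3 : 0 < (H^2-2*H*p-ρ^2+p^2*g^2)*(c*g*(b*c*g+S)) - 2*g^2*p^2*b*(1-c^2*(b^2+uo^2)) := by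
    refine pos_of_mul_pos'' _ _ hupos ?_
    have hnn : 0 ≤ g^2*p^2*((1-b^2)*(1-c^2*(b^2+uo^2))^2) :=
      mul_nonneg (mul_nonneg (sq_nonneg g) (sq_nonneg p))
        (mul_nonneg (by linarith) (sq_nonneg _))
    linarith [hW, hnn]
  have hWs : 0 < (H^2-2*H*p-ρ^2+p^2*g^2)*((b-β)*(1-c^2*(b^2+uo^2)))^2
      - g^2*p^2*(2*b*((b-β)*(1-c^2*(b^2+uo^2)))*(1-c^2*(b^2+uo^2))
        + (1-b^2)*(1-c^2*(b^2+uo^2))^2) := by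
    have P1 : 0 ≤ ((b-β)*(1-c^2*(b^2+uo^2)) - c*g*(b*c*g+S))
        * ((H^2-2*H*p-ρ^2+p^2*g^2)*((b-β)*(1-c^2*(b^2+uo^2)))) :=
      mul_nonneg (by linarith) (mul_nonneg hAg.le (mul_nonneg hspos.le hK.le))
    have P2 : 0 ≤ ((b-β)*(1-c^2*(b^2+uo^2)) - c*g*(b*c*g+S))
        * ((H^2-2*H*p-ρ^2+p^2*g^2)*(c*g*(b*c*g+S)) - 2*g^2*p^2*b*(1-c^2*(b^2+uo^2))) :=
      mul_nonneg (by linarith) h3.le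
    linarith [hW, P1, P2]
  have htarget : 0 < (H^2-2*H*p-ρ^2+p^2*g^2)*(b-β)^2 - g^2*p^2*(2*b*(b-β)+1-b^2) := by
    refine pos_of_mul_pos'' _ ((1-c^2*(b^2+uo^2))^2) (pow_pos hK 2) ?_
    linarith [hWs]
  have hDg : D*g = ρ := by rw [hD]; linear_combination ρ*hγg
  have hmig : mi*g^2 = H*b := by rw [hmi]; linear_combination (H*b*(γ*g+1))*hγg
  have hmog : mo*g^2 = H*uo := by rw [hmo]; linear_combination (H*uo*(γ*g+1))*hγg
  refine ⟨?_, ?_, ?_⟩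
  · have e : -β*D + D*b = D*(b-β) := by ring
    rw [e]; exact mul_pos hDpos hspos
  · have e : -β*E + (E+p)*b = E*(b-β) + p*b := by ring
    rw [e]; exact hcomp2
  · have key : ((-β*E + (E+p)*b)^2 - (-β*D + D*b)^2
        - ((-β*mi + (mi*b+p))^2 + (-β*mo + mo*b)^2))*g^4
        = ((H^2-2*H*p-ρ^2+p^2*g^2)*(b-β)^2 - g^2*p^2*(2*b*(b-β)+1-b^2))*g^2 := by
      linear_combination (H*(b-β)^2 + g^2*E*(b-β)^2 - g^2*p*(b-β)^2 + 2*b*g^2*p*(b-β))*hEg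
        + (-(g^2*ρ*(b-β)^2) - g^3*D*(b-β)^2)*hDg
        + (-(g^2*mi*(b-β)^2) - 2*g^2*p*(b-β) - b*H*(b-β)^2)*hmig
        + (-(g^2*mo*(b-β)^2) - uo*H*(b-β)^2)*hmog
        + (-(H^2*(b-β)^2))*huo2
    refine pos_of_mul_pos'' _ (g^4) (pow_pos hg 4) ?_
    rw [key]
    exact mul_pos htarget (pow_pos hg 2)


/-- If `U = (D, m, E) ∈ G` (built from primitives, `Γ ∈ (1,2]`) and
`β ≤ λ_i^{(1)}(U)`, then `-βU + F_i(U) ∈ G`. -/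
theorem fluxsub_betaU_admissible (Γ ρ u1 u2 p : ℝ)
    (γ e h cs D m1 m2 E ui ei1 ei2 lam1 β : ℝ)
    (hΓ1 : 1 < Γ) (hΓ2 : Γ ≤ 2) (hρ : 0 < ρ) (hp : 0 < p)
    (hu : u1 ^ 2 + u2 ^ 2 < 1)
    (hγ : γ = 1 / Real.sqrt (1 - (u1 ^ 2 + u2 ^ 2)))
    (he : e = p / ((Γ - 1) * ρ)) (hh : h = 1 + e + p / ρ)
    (hcs : cs = Real.sqrt (Γ * p / (ρ * h)))
    (hD : D = ρ * γ) (hm1 : m1 = ρ * h * γ ^ 2 * u1) (hm2 : m2 = ρ * h * γ ^ 2 * u2)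
    (hE : E = ρ * h * γ ^ 2 - p)
    (hi : (ui = u1 ∧ ei1 = 1 ∧ ei2 = 0) ∨ (ui = u2 ∧ ei1 = 0 ∧ ei2 = 1))
    (hlam1 : lam1 = (ui * (1 - cs ^ 2) -
        cs / γ * Real.sqrt (1 - ui ^ 2 - cs ^ 2 * ((u1 ^ 2 + u2 ^ 2) - ui ^ 2))) /
        (1 - cs ^ 2 * (u1 ^ 2 + u2 ^ 2)))
    (hβ : β ≤ lam1) :
    -β * D + D * ui > 0 ∧
      -β * E + (E + p) * ui > 0 ∧
      (-β * E + (E + p) * ui) ^ 2 - (-β * D + D * ui) ^ 2 -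
        ((-β * m1 + (m1 * ui + p * ei1)) ^ 2 +
          (-β * m2 + (m2 * ui + p * ei2)) ^ 2) > 0 := by
  rw [he] at hh
  obtain ⟨hui, he1, he2⟩ | ⟨hui, he1, he2⟩ := hi <;> subst ui <;> subst he1 <;> subst he2
  · have haux := aux_rhd Γ ρ p u1 u2 γ h cs D m1 m2 E lam1 β
      hΓ1 hΓ2 hρ hp hu hγ hh hcs hD hm1 hm2 hE hlam1 hβ
    refine ⟨haux.1, haux.2.1, ?_⟩
    have e3 : (-β * E + (E + p) * u1) ^ 2 - (-β * D + D * u1) ^ 2 -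
        ((-β * m1 + (m1 * u1 + p * 1)) ^ 2 + (-β * m2 + (m2 * u1 + p * 0)) ^ 2)
        = (-β * E + (E + p) * u1) ^ 2 - (-β * D + D * u1) ^ 2 -
        ((-β * m1 + (m1 * u1 + p)) ^ 2 + (-β * m2 + m2 * u1) ^ 2) := by ring
    rw [e3]; exact haux.2.2
  · have hu' : u2 ^ 2 + u1 ^ 2 < 1 := by linarith
    have hγ' : γ = 1 / Real.sqrt (1 - (u2 ^ 2 + u1 ^ 2)) := by
      rw [show (1:ℝ) - (u2 ^ 2 + u1 ^ 2) = 1 - (u1 ^ 2 + u2 ^ 2) from by ring]; exact hγ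
    have hlam1' : lam1 = (u2 * (1 - cs ^ 2) -
        cs / γ * Real.sqrt (1 - u2 ^ 2 - cs ^ 2 * ((u2 ^ 2 + u1 ^ 2) - u2 ^ 2))) /
        (1 - cs ^ 2 * (u2 ^ 2 + u1 ^ 2)) := by
      rw [show (1:ℝ) - u2 ^ 2 - cs ^ 2 * ((u2 ^ 2 + u1 ^ 2) - u2 ^ 2)
            = 1 - u2 ^ 2 - cs ^ 2 * ((u1 ^ 2 + u2 ^ 2) - u2 ^ 2) from by ring,
          show (1:ℝ) - cs ^ 2 * (u2 ^ 2 + u1 ^ 2) = 1 - cs ^ 2 * (u1 ^ 2 + u2 ^ 2) from by ring]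
      exact hlam1
    have haux := aux_rhd Γ ρ p u2 u1 γ h cs D m2 m1 E lam1 β
      hΓ1 hΓ2 hρ hp hu' hγ' hh hcs hD hm2 hm1 hE hlam1' hβ
    refine ⟨haux.1, haux.2.1, ?_⟩
    have e3 : (-β * E + (E + p) * u2) ^ 2 - (-β * D + D * u2) ^ 2 -
        ((-β * m1 + (m1 * u2 + p * 0)) ^ 2 + (-β * m2 + (m2 * u2 + p * 1)) ^ 2)
        = (-β * E + (E + p) * u2) ^ 2 - (-β * D + D * u2) ^ 2 -
        ((-β * m2 + (m2 * u2 + p)) ^ 2 + (-β * m1 + m1 * u2) ^ 2) := by ring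
    rw [e3]; exact haux.2.2
end

section
/- For an RHD state with |u| < 1, pressure p > 0, sound speed c_s ∈ (0,1) with c_s² < Γ-1 and Γ ∈ (1,2], the quantity E(λ_i^{(4)}(U) - u_i) - p u_i is bounded below by (p/(c_s(1 - c_s²|u|²)))·(-c_s u_i(Γ - c_s² + 1) + Γ - c_s²γ^{-2}) and is strictly positive; in particular E λ_i^{(4)} - (E+p)u_i > 0. -/
set_option maxHeartbeats 1000000 in
/-- For an RHD state with `|u| < 1`, `p > 0`, `0 < c_s < 1`, `c_s² < Γ-1`,
`Γ ∈ (1,2]`, the quantity `E(λ_i^{(4)} - u_i) - p u_i` equals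
`(p/(c_s(1-c_s²|u|²)))(-c_s u_i(Γ-c_s²+1) + Γ - c_s²γ⁻²)`-type lower-bounded
term and is strictly positive; in particular `E λ_i^{(4)} - (E+p)u_i > 0`. -/
theorem energy_component_positive (Γ u1 u2 p cs γ E ui lam4 : ℝ)
    (hΓ1 : 1 < Γ) (hΓ2 : Γ ≤ 2) (hp : 0 < p)
    (hu : u1 ^ 2 + u2 ^ 2 < 1) (hcs0 : 0 < cs) (hcs1 : cs < 1)
    (hcsΓ : cs ^ 2 < Γ - 1)
    (hγ : γ = 1 / Real.sqrt (1 - (u1 ^ 2 + u2 ^ 2)))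
    (hE : E = Γ * p * γ ^ 2 / cs ^ 2 - p)
    (hi : ui = u1 ∨ ui = u2)
    (hlam4 : lam4 = (ui * (1 - cs ^ 2) +
        cs / γ * Real.sqrt (1 - ui ^ 2 - cs ^ 2 * ((u1 ^ 2 + u2 ^ 2) - ui ^ 2))) /
        (1 - cs ^ 2 * (u1 ^ 2 + u2 ^ 2))) :
    E * (lam4 - ui) - p * ui ≥
        p / (cs * (1 - cs ^ 2 * (u1 ^ 2 + u2 ^ 2))) *
          (-cs * ui * (Γ - cs ^ 2 + 1) + Γ - cs ^ 2 / γ ^ 2) ∧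
      E * (lam4 - ui) - p * ui > 0 ∧
      E * lam4 - (E + p) * ui > 0 := by
  set s := u1 ^ 2 + u2 ^ 2 with hsdef
  have hs0 : 0 ≤ s := by positivity
  have h1s : 0 < 1 - s := by linarith
  have hsq1s : 0 < Real.sqrt (1 - s) := Real.sqrt_pos.mpr h1s
  have hγpos : 0 < γ := by rw [hγ]; positivity
  have hγne : γ ≠ 0 := ne_of_gt hγpos
  have hγsq : γ ^ 2 * (1 - s) = 1 := by
    rw [hγ]
    rw [div_pow, one_pow, div_mul_eq_mul_div, Real.sq_sqrt h1s.le]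
    field_simp
  have hγ1 : 1 ≤ γ ^ 2 := by nlinarith
  have hui2 : ui ^ 2 ≤ s := by
    rcases hi with h | h <;> subst h <;> simp only [hsdef]
    · linarith [sq_nonneg u2]
    · linarith [sq_nonneg u1]
  have hui1 : ui ≤ 1 := by nlinarith
  have hui1' : -1 ≤ ui := by nlinarith
  set R := 1 - ui ^ 2 - cs ^ 2 * (s - ui ^ 2) with hRdef
  have hRge : 1 - s ≤ R := by nlinarith
  have hRpos : 0 < R := lt_of_lt_of_le h1s hRge
  set sq := Real.sqrt R with hsqdef
  have hsqsq : sq ^ 2 = R := Real.sq_sqrt hRpos.le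
  have hsqpos : 0 < sq := Real.sqrt_pos.mpr hRpos
  have hγsqrt : γ * Real.sqrt (1 - s) = 1 := by rw [hγ]; field_simp
  have hsqge : 1 ≤ γ * sq := by
    have h1 : Real.sqrt (1 - s) ≤ sq := Real.sqrt_le_sqrt hRge
    calc 1 = γ * Real.sqrt (1 - s) := hγsqrt.symm
    _ ≤ γ * sq := by nlinarith
  have hD : 0 < 1 - cs ^ 2 * s := by nlinarith
  have hDne : (1 - cs ^ 2 * s) ≠ 0 := ne_of_gt hD
  have hcsne : cs ≠ 0 := ne_of_gt hcs0
  have hcs2 : cs ^ 2 < 1 := by nlinarith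
  have hΓγ : 0 < Γ * γ ^ 2 - cs ^ 2 := by
    have h := mul_le_mul_of_nonneg_left hγ1 (by linarith : (0:ℝ) ≤ Γ)
    nlinarith
  have hinv : cs ^ 2 / γ ^ 2 = cs ^ 2 * (1 - s) := by
    field_simp
    linear_combination (-1) * hγsq
  have hE' : E * cs ^ 2 = Γ * p * γ ^ 2 - p * cs ^ 2 := by
    rw [hE]; field_simp
  have hlam' : (lam4 - ui) * (γ * (1 - cs ^ 2 * s)) =
      -cs ^ 2 * ui * (1 - s) * γ + cs * sq := by
    rw [hlam4]; field_simp; ring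
  have hZ : 0 < cs * γ ^ 2 * (1 - cs ^ 2 * s) := by positivity
  have hkey : E * (lam4 - ui) - p * ui =
      (p * γ ^ 2 * (-cs * ui * (Γ - cs ^ 2 + 1) + Γ - cs ^ 2 * (1 - s)) +
        p * (Γ * γ ^ 2 - cs ^ 2) * (γ * sq - 1)) /
      (cs * γ ^ 2 * (1 - cs ^ 2 * s)) := by
    rw [eq_div_iff (ne_of_gt hZ)]
    linear_combination (cs * γ * E) * hlam' + (γ * sq - cs * ui * (1 - s) * γ ^ 2) * hE' +
      (p * cs ^ 2 - p * Γ * γ ^ 2 * cs * ui) * hγsq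
  have hbr : 0 < -cs * ui * (Γ - cs ^ 2 + 1) + Γ - cs ^ 2 * (1 - s) := by
    nlinarith [mul_nonneg (sub_nonneg.mpr hui1)
      (by nlinarith : (0:ℝ) ≤ cs * (Γ + 1 - cs ^ 2) - cs ^ 2 * (ui + 1)),
      mul_pos (by linarith : (0:ℝ) < 1 - cs) (by nlinarith : (0:ℝ) < Γ - cs - cs ^ 2)]
  have hextra : 0 ≤ p * (Γ * γ ^ 2 - cs ^ 2) * (γ * sq - 1) := by
    have h1 : 0 ≤ γ * sq - 1 := by linarith
    positivity
  have hfirst : E * (lam4 - ui) - p * ui ≥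
      p / (cs * (1 - cs ^ 2 * s)) *
        (-cs * ui * (Γ - cs ^ 2 + 1) + Γ - cs ^ 2 / γ ^ 2) := by
    rw [hinv, hkey]
    have heq : p / (cs * (1 - cs ^ 2 * s)) *
        (-cs * ui * (Γ - cs ^ 2 + 1) + Γ - cs ^ 2 * (1 - s)) =
        (p * γ ^ 2 * (-cs * ui * (Γ - cs ^ 2 + 1) + Γ - cs ^ 2 * (1 - s))) /
        (cs * γ ^ 2 * (1 - cs ^ 2 * s)) := by
      field_simp
    rw [heq]
    exact (div_le_div_iff_of_pos_right hZ).mpr (by linarith)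
  have hsecond : E * (lam4 - ui) - p * ui > 0 := by
    rw [hkey]
    apply div_pos ?_ hZ
    have h1 : 0 < p * γ ^ 2 * (-cs * ui * (Γ - cs ^ 2 + 1) + Γ - cs ^ 2 * (1 - s)) :=
      mul_pos (by positivity) hbr
    linarith
  refine ⟨hfirst, hsecond, ?_⟩
  have h3 : E * lam4 - (E + p) * ui = E * (lam4 - ui) - p * ui := by ring
  rw [h3]; exact hsecond
end

section
/- Let f(s) = (Γγ²/c_s²)·(2/(Γ-1) - Γc_s²/(Γ-1)²)·(s - u_i)² + s² - 1, where Γ ∈ (1,2], c_s ∈ (0, sqrt(Γ-1)), γ = 1/sqrt(1-|u|²) with |u| < 1, and u_i ∈ (-1,1) a component of u. Then f is monotonically increasing on the interval [λ_i^{(4)}(U), 1), where λ_i^{(4)}(U) = (u_i(1-c_s²) + c_sγ^{-1}sqrt(1-u_i²-c_s²(|u|²-u_i²)))/(1-c_s²|u|²). -/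
set_option maxHeartbeats 1000000 in
/-- The quadratic `f(s) = (Γγ²/c_s²)(2/(Γ-1) - Γc_s²/(Γ-1)²)(s-u_i)² + s² - 1`
is monotonically increasing on `[λ_i^{(4)}(U), 1)`. -/
theorem f_monotone_on (Γ u1 u2 cs γ ui lam4 : ℝ)
    (hΓ1 : 1 < Γ) (hΓ2 : Γ ≤ 2)
    (hcs0 : 0 < cs) (hcsΓ : cs ^ 2 < Γ - 1)
    (hu : u1 ^ 2 + u2 ^ 2 < 1)
    (hγ : γ = 1 / Real.sqrt (1 - (u1 ^ 2 + u2 ^ 2)))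
    (hi : ui = u1 ∨ ui = u2)
    (hlam4 : lam4 = (ui * (1 - cs ^ 2) +
        cs / γ * Real.sqrt (1 - ui ^ 2 - cs ^ 2 * ((u1 ^ 2 + u2 ^ 2) - ui ^ 2))) /
        (1 - cs ^ 2 * (u1 ^ 2 + u2 ^ 2))) :
    MonotoneOn
      (fun s : ℝ =>
        Γ * γ ^ 2 / cs ^ 2 * (2 / (Γ - 1) - Γ * cs ^ 2 / (Γ - 1) ^ 2) *
          (s - ui) ^ 2 + s ^ 2 - 1)
      (Set.Ico lam4 1) := by
  have hΓ1' : (0:ℝ) < Γ - 1 := by linarith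
  have hw0 : (0:ℝ) ≤ u1 ^ 2 + u2 ^ 2 := by positivity
  have hui2' : ui ^ 2 ≤ u1 ^ 2 + u2 ^ 2 := by
    rcases hi with h | h <;> rw [h] <;> nlinarith [sq_nonneg u1, sq_nonneg u2]
  set w : ℝ := u1 ^ 2 + u2 ^ 2 with hwdef
  have hw1 : w < 1 := hu
  have hui2 : ui ^ 2 ≤ w := hui2'
  have hg : (0:ℝ) < 1 - w := by linarith
  set t : ℝ := Real.sqrt (1 - w) with htdef
  have ht0 : 0 < t := Real.sqrt_pos.mpr hg
  have ht2 : t ^ 2 = 1 - w := Real.sq_sqrt hg.le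
  have hcs2 : cs ^ 2 < 1 := by linarith
  have hD : (0:ℝ) < 1 - cs ^ 2 * w := by nlinarith
  set R : ℝ := 1 - ui ^ 2 - cs ^ 2 * (w - ui ^ 2) with hRdef
  have hR0 : 0 ≤ R := by nlinarith [sq_nonneg ui, sq_nonneg cs]
  set S : ℝ := Real.sqrt R with hSdef
  have hS0 : 0 ≤ S := Real.sqrt_nonneg R
  have hS2 : S ^ 2 = R := Real.sq_sqrt hR0
  have hγ2 : γ ^ 2 * t ^ 2 = 1 := by rw [hγ]; field_simp
  have hcsγ : cs / γ = cs * t := by rw [hγ]; field_simp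
  have hlam4D : lam4 * (1 - cs ^ 2 * w) = ui * (1 - cs ^ 2) + cs * t * S := by
    rw [hlam4, hcsγ, div_mul_cancel₀ _ (ne_of_gt hD)]
  set A : ℝ := Γ * γ ^ 2 / cs ^ 2 * (2 / (Γ - 1) - Γ * cs ^ 2 / (Γ - 1) ^ 2) with hAdef
  clear_value w t R S A
  have hB : 2 / (Γ - 1) - Γ * cs ^ 2 / (Γ - 1) ^ 2 = (2 * (Γ - 1) - Γ * cs ^ 2) / (Γ - 1) ^ 2 := by
    field_simp
  have hBnum : 0 ≤ 2 * (Γ - 1) - Γ * cs ^ 2 := by nlinarith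
  have hA0 : 0 ≤ A := by
    rw [hAdef, hB]
    exact mul_nonneg (div_nonneg (mul_nonneg (by linarith) (sq_nonneg γ)) (sq_nonneg cs))
      (div_nonneg hBnum (by positivity))
  -- Γ·B ≥ 1 - cs², and A·cs²·t² = Γ·B
  have hkey1 : (1 - cs ^ 2) * (Γ - 1) ^ 2 ≤ Γ * (2 * (Γ - 1) - Γ * cs ^ 2) := by
    nlinarith [mul_nonneg hΓ1'.le (show (0:ℝ) ≤ 2 - Γ by linarith),
      mul_le_mul_of_nonneg_right hcsΓ.le (show (0:ℝ) ≤ 2 * Γ - 1 by linarith)]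
  have hAG : A * (cs ^ 2 * t ^ 2) * (Γ - 1) ^ 2 = Γ * (2 * (Γ - 1) - Γ * cs ^ 2) := by
    have hcsne : (cs:ℝ) ^ 2 ≠ 0 := by positivity
    have hΓne : ((Γ - 1):ℝ) ^ 2 ≠ 0 := by positivity
    rw [hAdef, hB]
    calc Γ * γ ^ 2 / cs ^ 2 * ((2 * (Γ - 1) - Γ * cs ^ 2) / (Γ - 1) ^ 2) * (cs ^ 2 * t ^ 2) *
          (Γ - 1) ^ 2
        = (γ ^ 2 * t ^ 2) * (Γ * (2 * (Γ - 1) - Γ * cs ^ 2)) * (cs ^ 2 / cs ^ 2) *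
          ((Γ - 1) ^ 2 / (Γ - 1) ^ 2) := by ring
      _ = Γ * (2 * (Γ - 1) - Γ * cs ^ 2) := by rw [div_self hcsne, div_self hΓne, hγ2]; ring
  have hP1 : 1 - cs ^ 2 ≤ A * (cs ^ 2 * t ^ 2) := by
    have h := hkey1.trans_eq hAG.symm
    exact le_of_mul_le_mul_right (by linarith [h]) (by positivity : (0:ℝ) < (Γ - 1) ^ 2)
  have hcst2 : cs ^ 2 * t ^ 2 = cs ^ 2 - cs ^ 2 * w := by rw [ht2]; ring
  -- key inequality: A·ui·D ≤ (A+1)·(ui(1-cs²)+cs·t·S)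
  have hid : (A + 1) * (ui * (1 - cs ^ 2) + cs * t * S) - A * ui * (1 - cs ^ 2 * w)
      = ui * (1 - cs ^ 2 * w) - ui * (A * (cs ^ 2 * t ^ 2) + cs ^ 2 * t ^ 2)
        + (A + 1) * (cs * t * S) := by
    linear_combination ((A + 1) * ui * cs ^ 2) * ht2
  have hmain : A * ui * (1 - cs ^ 2 * w) ≤ (A + 1) * (ui * (1 - cs ^ 2) + cs * t * S) := by
    rcases le_or_gt ui 0 with h | h
    · have hb : 1 - cs ^ 2 * w ≤ A * (cs ^ 2 * t ^ 2) + cs ^ 2 * t ^ 2 := by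
        linarith [hcst2, hP1]
      have h1 : 0 ≤ (-ui) * (A * (cs ^ 2 * t ^ 2) + cs ^ 2 * t ^ 2 - (1 - cs ^ 2 * w)) :=
        mul_nonneg (by linarith) (by linarith)
      have h2 : 0 ≤ (A + 1) * (cs * t * S) :=
        mul_nonneg (by linarith) (by positivity)
      linarith [hid, h1, h2]
    · have hSge : cs * ui * t ≤ S := by
        rw [hSdef]
        rw [show cs * ui * t = Real.sqrt ((cs * ui * t) ^ 2) from
          (Real.sqrt_sq (by positivity)).symm]
        apply Real.sqrt_le_sqrt
        have he : cs ^ 2 * ui ^ 2 * t ^ 2 = cs ^ 2 * ui ^ 2 * (1 - w) := by rw [ht2]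
        have hp : 0 ≤ (1 - ui ^ 2) * (1 - cs ^ 2 * w) :=
          mul_nonneg (by linarith) hD.le
        linarith [hRdef, he, hp]
      have h3 : ui * (A * (cs ^ 2 * t ^ 2) + cs ^ 2 * t ^ 2) ≤ (A + 1) * (cs * t * S) := by
        have := mul_le_mul_of_nonneg_left hSge
          (show (0:ℝ) ≤ (A + 1) * (cs * t) by positivity)
        linarith [this]
      have h4 : 0 ≤ ui * (1 - cs ^ 2 * w) := mul_nonneg h.le hD.le
      linarith [hid, h3, h4]
  have hkey : A * ui ≤ (A + 1) * lam4 := by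
    have h5 : A * ui * (1 - cs ^ 2 * w) ≤ (A + 1) * lam4 * (1 - cs ^ 2 * w) := by
      calc A * ui * (1 - cs ^ 2 * w) ≤ (A + 1) * (ui * (1 - cs ^ 2) + cs * t * S) := hmain
        _ = (A + 1) * lam4 * (1 - cs ^ 2 * w) := by rw [← hlam4D]; ring
    exact le_of_mul_le_mul_right h5 hD
  intro a ha b hb hab
  obtain ⟨ha1, ha2⟩ := ha
  obtain ⟨hb1, hb2⟩ := hb
  simp only
  have hA1 : (0:ℝ) < A + 1 := by linarith
  have h6 : 2 * (A * ui) ≤ (A + 1) * (a + b) := by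
    linarith [mul_nonneg hA1.le (sub_nonneg.mpr ha1), mul_nonneg hA1.le (sub_nonneg.mpr hb1),
      hkey]
  linarith [mul_nonneg (sub_nonneg.mpr hab)
    (show 0 ≤ (A + 1) * (a + b) - 2 * (A * ui) by linarith)]
end

section
/- For an admissible RHD state, (E² - |m|² - D² - p²) = (Γp²/c_s²)γ²(2/(Γ-1) - Γc_s²/(Γ-1)²), where c_s² = Γp/(ρh), and this quantity is strictly positive when 0 < c_s² < Γ-1, Γ ∈ (1,2]. -/
/-!
Since `γ²(1 - |u|²) = 1`, the Minkowski norm `E² - |m|² - D² - p²` of the conserved variables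
collapses to `γ²((ρh)² - 2pρh - ρ²)`. For a perfect gas `(Γ-1)ρh = (Γ-1)ρ + Γp`, so eliminating `ρ`
and using `c_s² ρh = Γp` gives the stated closed form, whose last factor is positive because
`Γ c_s² < Γ(Γ-1) ≤ 2(Γ-1)`.
-/

theorem one_div_sqrt_sq_mul_self {s : ℝ} (hs : 0 < s) : (1 / √s) ^ 2 * s = 1 := by
  rw [div_pow, one_pow, Real.sq_sqrt hs.le, one_div_mul_cancel hs.ne']

theorem conserved_minkowski_norm {R : Type*} [CommRing R] {ρ h γ p u₁ u₂ : R}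
    (hγ : γ ^ 2 * (1 - (u₁ ^ 2 + u₂ ^ 2)) = 1) :
    (ρ * h * γ ^ 2 - p) ^ 2 - ((ρ * h * γ ^ 2 * u₁) ^ 2 + (ρ * h * γ ^ 2 * u₂) ^ 2)
        - (ρ * γ) ^ 2 - p ^ 2 = γ ^ 2 * ((ρ * h) ^ 2 - 2 * p * (ρ * h) - ρ ^ 2) := by
  linear_combination ρ ^ 2 * h ^ 2 * γ ^ 2 * hγ

theorem perfectGas_sub_one_mul_enthalpy {Γ ρ p : ℝ} (hΓ : Γ - 1 ≠ 0) (hρ : ρ ≠ 0) :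
    (Γ - 1) * (ρ * (1 + p / ((Γ - 1) * ρ) + p / ρ)) = (Γ - 1) * ρ + Γ * p := by
  field_simp
  ring

/-- Here `w` plays the role of `ρh` and `c` that of `c_s²`. -/
theorem sq_sub_two_mul_sub_sq_eq {K : Type*} [Field K] {Γ ρ p w c : K}
    (hΓ : Γ - 1 ≠ 0) (hc : c ≠ 0) (hcw : c * w = Γ * p)
    (hw : (Γ - 1) * w = (Γ - 1) * ρ + Γ * p) :
    w ^ 2 - 2 * p * w - ρ ^ 2 = Γ * p ^ 2 / c * (2 / (Γ - 1) - Γ * c / (Γ - 1) ^ 2) := by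
  have hpw : Γ * p ^ 2 / c = p * w := by
    rw [div_eq_iff hc]
    linear_combination -p * hcw
  rw [hpw]
  field_simp
  linear_combination ((Γ - 1) * w - Γ * p + (Γ - 1) * ρ) * hw + p * Γ * hcw

theorem two_div_sub_mul_div_sq_pos {Γ c : ℝ} (hΓ1 : 1 < Γ) (hΓ2 : Γ ≤ 2) (hc : c < Γ - 1) :
    0 < 2 / (Γ - 1) - Γ * c / (Γ - 1) ^ 2 := by
  have hΓ0 : 0 < Γ - 1 := sub_pos.mpr hΓ1
  have hlt : Γ * c < 2 * (Γ - 1) :=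
    calc Γ * c < Γ * (Γ - 1) := mul_lt_mul_of_pos_left hc (by linarith)
      _ ≤ 2 * (Γ - 1) := mul_le_mul_of_nonneg_right hΓ2 hΓ0.le
  rw [sub_pos, div_lt_div_iff₀ (by positivity) hΓ0, sq, ← mul_assoc]
  exact mul_lt_mul_of_pos_right hlt hΓ0

/-- For an admissible RHD state,
`E² - |m|² - D² - p² = (Γp²/c_s²)γ²(2/(Γ-1) - Γc_s²/(Γ-1)²)`, and this quantity
is strictly positive when `0 < c_s² < Γ-1`, `Γ ∈ (1,2]`. -/
theorem minkowski_identity (Γ ρ u1 u2 p γ h cs D m1 m2 E : ℝ)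
    (hΓ1 : 1 < Γ) (hΓ2 : Γ ≤ 2) (hρ : 0 < ρ) (hp : 0 < p)
    (hu : u1 ^ 2 + u2 ^ 2 < 1)
    (hγ : γ = 1 / Real.sqrt (1 - (u1 ^ 2 + u2 ^ 2)))
    (hh : h = 1 + p / ((Γ - 1) * ρ) + p / ρ)
    (hcs : cs = Real.sqrt (Γ * p / (ρ * h)))
    (hD : D = ρ * γ) (hm1 : m1 = ρ * h * γ ^ 2 * u1) (hm2 : m2 = ρ * h * γ ^ 2 * u2)
    (hE : E = ρ * h * γ ^ 2 - p)
    (hcs0 : 0 < cs ^ 2) (hcsΓ : cs ^ 2 < Γ - 1) :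
    E ^ 2 - (m1 ^ 2 + m2 ^ 2) - D ^ 2 - p ^ 2 =
        Γ * p ^ 2 / cs ^ 2 * γ ^ 2 *
          (2 / (Γ - 1) - Γ * cs ^ 2 / (Γ - 1) ^ 2) ∧
      E ^ 2 - (m1 ^ 2 + m2 ^ 2) - D ^ 2 - p ^ 2 > 0 := by
  have hΓ0 : 0 < Γ - 1 := sub_pos.mpr hΓ1
  have hs : 0 < 1 - (u1 ^ 2 + u2 ^ 2) := sub_pos.mpr hu
  have hγ2 : γ ^ 2 * (1 - (u1 ^ 2 + u2 ^ 2)) = 1 := hγ ▸ one_div_sqrt_sq_mul_self hs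
  have hw : (Γ - 1) * (ρ * h) = (Γ - 1) * ρ + Γ * p :=
    hh ▸ perfectGas_sub_one_mul_enthalpy hΓ0.ne' hρ.ne'
  have hρh : 0 < ρ * h := pos_of_mul_pos_right (hw ▸ by positivity) hΓ0.le
  have hcw : cs ^ 2 * (ρ * h) = Γ * p := by
    rw [hcs, Real.sq_sqrt (by positivity), div_mul_cancel₀ _ hρh.ne']
  have key : E ^ 2 - (m1 ^ 2 + m2 ^ 2) - D ^ 2 - p ^ 2 =
      Γ * p ^ 2 / cs ^ 2 * γ ^ 2 * (2 / (Γ - 1) - Γ * cs ^ 2 / (Γ - 1) ^ 2) := by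
    rw [hD, hm1, hm2, hE, conserved_minkowski_norm hγ2,
      sq_sub_two_mul_sub_sq_eq hΓ0.ne' hcs0.ne' hcw hw]
    ring
  have hγ0 : 0 < γ := hγ ▸ by positivity
  exact ⟨key, key ▸ mul_pos (by positivity) (two_div_sub_mul_div_sq_pos hΓ1 hΓ2 hcsΓ)⟩
end

section
/- Suppose U_LD, U_RD, U_LU, U_RU ∈ G with fluxes F and G in the x- and y-directions, and wave speeds satisfying S_L ≤ 2λ_A^{(1)}, S_R ≥ 2λ_A^{(4)}, S_D ≤ 2λ_B^{(1)}, S_U ≥ 2λ_B^{(4)} at each of the four states, with S_L < 0 < S_R and S_D < 0 < S_U. Then each of the four states H_LD = U_LD - F(U_LD)/S_L - G(U_LD)/S_D, H_RD = U_RD - F(U_RD)/S_R - G(U_RD)/S_D, H_LU = U_LU - F(U_LU)/S_L - G(U_LU)/S_U, H_RU = U_RU - F(U_RU)/S_R - G(U_RU)/S_U belongs to G. -/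
/-!
The admissible set is the open future light cone `{X₀ > 0, X₃ > ‖(X₀, X₁, X₂)‖}`, a convex
cone, and `H_LD = ½ (U - (S_L/2)⁻¹ F) + ½ (U - (S_D/2)⁻¹ G)` (similarly at the other corners),
so it suffices that `F - νU` lies in the cone for `ν ≤ λ_A^{(1)}`, together with the analogues
for `λ_A^{(4)}` and for `G`. Along the pencil `μ ↦ F - μU` the Minkowski form is the convex
quadratic `q(μ) = κ (u₁ - μ)² - p² (1 - μ²)`, negative at `μ = u₁`. At `μ = λ_A^{(1)} < u₁` it
equals `k² (κ c_s² / γ² - p² (1 - c_s²))` for some `k > 0`, which is positive when `1 < Γ ≤ 2`;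
hence `q > 0` on `(-∞, λ_A^{(1)}]`. The time component of `F - μU` is affine in `μ` and vanishes
only where `q ≤ 0`, so it stays positive there as well. The three other directions follow by
the symmetries `u₁ ↦ -u₁` and `u₁ ↔ u₂` of the speeds and of the quadratic.
-/

/-- A 2D special RHD state given by primitive variables. -/
structure RHDState where
  ρ : ℝ
  u1 : ℝ
  u2 : ℝ
  p : ℝ
  hρ : 0 < ρ
  hp : 0 < p
  hu : u1 ^ 2 + u2 ^ 2 < 1

namespace RHDState

/-- Lorentz factor `γ = 1/√(1-|u|²)`. -/
noncomputable def lorentz (s : RHDState) : ℝ :=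
  1 / Real.sqrt (1 - (s.u1 ^ 2 + s.u2 ^ 2))

/-- Specific enthalpy `h = 1 + e + p/ρ` with `e = p/((Γ-1)ρ)`. -/
noncomputable def enth (Γ : ℝ) (s : RHDState) : ℝ :=
  1 + s.p / ((Γ - 1) * s.ρ) + s.p / s.ρ

/-- Sound speed `c_s = √(Γp/(ρh))`. -/
noncomputable def cs (Γ : ℝ) (s : RHDState) : ℝ :=
  Real.sqrt (Γ * s.p / (s.ρ * s.enth Γ))

/-- Conserved mass density `D = ργ`. -/
noncomputable def D (s : RHDState) : ℝ := s.ρ * s.lorentz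

/-- Momentum `m₁ = ρhγ²u₁`. -/
noncomputable def m1 (Γ : ℝ) (s : RHDState) : ℝ :=
  s.ρ * s.enth Γ * s.lorentz ^ 2 * s.u1

/-- Momentum `m₂ = ρhγ²u₂`. -/
noncomputable def m2 (Γ : ℝ) (s : RHDState) : ℝ :=
  s.ρ * s.enth Γ * s.lorentz ^ 2 * s.u2

/-- Total energy `E = ρhγ² - p`. -/
noncomputable def En (Γ : ℝ) (s : RHDState) : ℝ :=
  s.ρ * s.enth Γ * s.lorentz ^ 2 - s.p

/-- Conserved vector `U = (D, m₁, m₂, E)`. -/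
noncomputable def U (Γ : ℝ) (s : RHDState) : Fin 4 → ℝ :=
  ![s.D, s.m1 Γ, s.m2 Γ, s.En Γ]

/-- `x`-direction flux `F(U) = (Du₁, m₁u₁ + p, m₂u₁, (E+p)u₁)`. -/
noncomputable def Fx (Γ : ℝ) (s : RHDState) : Fin 4 → ℝ :=
  ![s.D * s.u1, s.m1 Γ * s.u1 + s.p, s.m2 Γ * s.u1, (s.En Γ + s.p) * s.u1]

/-- `y`-direction flux `G(U) = (Du₂, m₁u₂, m₂u₂ + p, (E+p)u₂)`. -/
noncomputable def Fy (Γ : ℝ) (s : RHDState) : Fin 4 → ℝ :=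
  ![s.D * s.u2, s.m1 Γ * s.u2, s.m2 Γ * s.u2 + s.p, (s.En Γ + s.p) * s.u2]

/-- Smallest eigenvalue of `∂F/∂U`. -/
noncomputable def lamX1 (Γ : ℝ) (s : RHDState) : ℝ :=
  (s.u1 * (1 - (s.cs Γ) ^ 2) - s.cs Γ / s.lorentz *
      Real.sqrt (1 - s.u1 ^ 2 - (s.cs Γ) ^ 2 * s.u2 ^ 2)) /
    (1 - (s.cs Γ) ^ 2 * (s.u1 ^ 2 + s.u2 ^ 2))

/-- Largest eigenvalue of `∂F/∂U`. -/
noncomputable def lamX4 (Γ : ℝ) (s : RHDState) : ℝ :=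
  (s.u1 * (1 - (s.cs Γ) ^ 2) + s.cs Γ / s.lorentz *
      Real.sqrt (1 - s.u1 ^ 2 - (s.cs Γ) ^ 2 * s.u2 ^ 2)) /
    (1 - (s.cs Γ) ^ 2 * (s.u1 ^ 2 + s.u2 ^ 2))

/-- Smallest eigenvalue of `∂G/∂U`. -/
noncomputable def lamY1 (Γ : ℝ) (s : RHDState) : ℝ :=
  (s.u2 * (1 - (s.cs Γ) ^ 2) - s.cs Γ / s.lorentz *
      Real.sqrt (1 - s.u2 ^ 2 - (s.cs Γ) ^ 2 * s.u1 ^ 2)) /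
    (1 - (s.cs Γ) ^ 2 * (s.u1 ^ 2 + s.u2 ^ 2))

/-- Largest eigenvalue of `∂G/∂U`. -/
noncomputable def lamY4 (Γ : ℝ) (s : RHDState) : ℝ :=
  (s.u2 * (1 - (s.cs Γ) ^ 2) + s.cs Γ / s.lorentz *
      Real.sqrt (1 - s.u2 ^ 2 - (s.cs Γ) ^ 2 * s.u1 ^ 2)) /
    (1 - (s.cs Γ) ^ 2 * (s.u1 ^ 2 + s.u2 ^ 2))

end RHDState

/-- The admissible set `G` in conserved variables `(D, m₁, m₂, E)`. -/
def admissibleSet : Set (Fin 4 → ℝ) :=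
  {X | X 0 > 0 ∧ X 3 - Real.sqrt ((X 0) ^ 2 + (X 1) ^ 2 + (X 2) ^ 2) > 0}

def minkowskiForm (X : Fin 4 → ℝ) : ℝ := X 3 ^ 2 - (X 0 ^ 2 + X 1 ^ 2 + X 2 ^ 2)

theorem mem_admissibleSet_iff {X : Fin 4 → ℝ} :
    X ∈ admissibleSet ↔ 0 < X 0 ∧ 0 < X 3 ∧ 0 < minkowskiForm X := by
  have hS : 0 ≤ X 0 ^ 2 + X 1 ^ 2 + X 2 ^ 2 := by positivity
  simp only [admissibleSet, Set.mem_ofPred_eq, gt_iff_lt, sub_pos, minkowskiForm]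
  refine and_congr_right fun _ =>
    ⟨fun h => ?_, fun ⟨h3, h⟩ => (Real.sqrt_lt' h3).2 (by linarith)⟩
  have h3 : 0 < X 3 := (Real.sqrt_nonneg _).trans_lt h
  exact ⟨h3, by linarith [(Real.sqrt_lt' h3).1 h]⟩

theorem smul_mem_admissibleSet {c : ℝ} {X : Fin 4 → ℝ} (hc : 0 < c)
    (hX : X ∈ admissibleSet) : c • X ∈ admissibleSet := by
  obtain ⟨h0, h3, hQ⟩ := mem_admissibleSet_iff.1 hX
  have hQc : minkowskiForm (c • X) = c ^ 2 * minkowskiForm X := by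
    simp only [minkowskiForm, Pi.smul_apply, smul_eq_mul]; ring
  refine mem_admissibleSet_iff.2 ⟨?_, ?_, ?_⟩
  · simpa using mul_pos hc h0
  · simpa using mul_pos hc h3
  · rw [hQc]; positivity

theorem sqrt_sq_add_sq_add_sq_eq_norm (a b c : ℝ) :
    √(a ^ 2 + b ^ 2 + c ^ 2) = ‖(!₂[a, b, c] : EuclideanSpace ℝ (Fin 3))‖ := by
  simp [EuclideanSpace.norm_eq, Fin.sum_univ_three, add_assoc]

theorem add_mem_admissibleSet {X Y : Fin 4 → ℝ} (hX : X ∈ admissibleSet)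
    (hY : Y ∈ admissibleSet) : X + Y ∈ admissibleSet := by
  obtain ⟨hX0, hX3⟩ := hX
  obtain ⟨hY0, hY3⟩ := hY
  refine ⟨by simp only [Pi.add_apply]; linarith, ?_⟩
  have htri : √((X 0 + Y 0) ^ 2 + (X 1 + Y 1) ^ 2 + (X 2 + Y 2) ^ 2) ≤
      √(X 0 ^ 2 + X 1 ^ 2 + X 2 ^ 2) + √(Y 0 ^ 2 + Y 1 ^ 2 + Y 2 ^ 2) := by
    simp only [sqrt_sq_add_sq_add_sq_eq_norm]
    have hsum : (!₂[X 0 + Y 0, X 1 + Y 1, X 2 + Y 2] : EuclideanSpace ℝ (Fin 3)) =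
        !₂[X 0, X 1, X 2] + !₂[Y 0, Y 1, Y 2] := by
      ext i; fin_cases i <;> simp
    rw [hsum]
    exact norm_add_le _ _
  simp only [Pi.add_apply]
  linarith

theorem minkowskiForm_neg (X : Fin 4 → ℝ) : minkowskiForm (-X) = minkowskiForm X := by
  simp [minkowskiForm]

theorem sub_smul_mem_admissibleSet {F U : Fin 4 → ℝ} {ν : ℝ} (hU3 : 0 < U 3)
    (hQ : ∀ μ ≤ ν, 0 < minkowskiForm (F - μ • U)) (h0 : 0 < (F - ν • U) 0) :
    F - ν • U ∈ admissibleSet := by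
  refine mem_admissibleSet_iff.2 ⟨h0, ?_, hQ ν le_rfl⟩
  -- the time component `F 3 - μ U 3` vanishes at `μ₀ = F 3 / U 3`, where the form is `≤ 0`
  by_contra! h3
  set μ₀ := F 3 / U 3
  have hμ₀ : μ₀ ≤ ν := by
    simp only [Pi.sub_apply, Pi.smul_apply, smul_eq_mul] at h3
    rw [div_le_iff₀ hU3]; linarith
  have hvanish : (F - μ₀ • U) 3 = 0 := by
    simp only [Pi.sub_apply, Pi.smul_apply, smul_eq_mul, μ₀]; field_simp; ring
  have hpos := hQ μ₀ hμ₀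
  rw [minkowskiForm, hvanish] at hpos
  nlinarith [sq_nonneg ((F - μ₀ • U) 0), sq_nonneg ((F - μ₀ • U) 1),
    sq_nonneg ((F - μ₀ • U) 2)]

theorem smul_sub_mem_admissibleSet {F U : Fin 4 → ℝ} {ν : ℝ} (hU3 : 0 < U 3)
    (hQ : ∀ μ ≥ ν, 0 < minkowskiForm (F - μ • U)) (h0 : 0 < (ν • U - F) 0) :
    ν • U - F ∈ admissibleSet := by
  have hpencil : ∀ μ : ℝ, -F - μ • U = -(F - (-μ) • U) := fun μ => by module
  have := sub_smul_mem_admissibleSet (F := -F) (ν := -ν) hU3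
    (fun μ hμ => by rw [hpencil, minkowskiForm_neg]; exact hQ _ (by linarith))
    (by rwa [hpencil, neg_neg, neg_sub])
  rwa [hpencil, neg_neg, neg_sub] at this

theorem sub_inv_smul_mem_admissibleSet_of_neg {F U : Fin 4 → ℝ} {ν : ℝ} (hν : ν < 0)
    (h : F - ν • U ∈ admissibleSet) : U - ν⁻¹ • F ∈ admissibleSet := by
  have : U - ν⁻¹ • F = (-ν)⁻¹ • (F - ν • U) := by
    have := hν.ne
    ext i; simp only [Pi.sub_apply, Pi.smul_apply, smul_eq_mul]; field_simp; ring
  rw [this]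
  exact smul_mem_admissibleSet (by simpa using hν) h

theorem sub_inv_smul_mem_admissibleSet_of_pos {F U : Fin 4 → ℝ} {ν : ℝ} (hν : 0 < ν)
    (h : ν • U - F ∈ admissibleSet) : U - ν⁻¹ • F ∈ admissibleSet := by
  have : U - ν⁻¹ • F = ν⁻¹ • (ν • U - F) := by
    ext i; simp only [Pi.sub_apply, Pi.smul_apply, smul_eq_mul]; field_simp
  rw [this]
  exact smul_mem_admissibleSet (inv_pos.2 hν) h

theorem sub_inv_smul_sub_inv_smul_mem_admissibleSet {U F G : Fin 4 → ℝ} {a b : ℝ} (ha : a ≠ 0)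
    (hb : b ≠ 0) (hF : U - (a / 2)⁻¹ • F ∈ admissibleSet) (hG : U - (b / 2)⁻¹ • G ∈ admissibleSet) :
    U - a⁻¹ • F - b⁻¹ • G ∈ admissibleSet := by
  have : U - a⁻¹ • F - b⁻¹ • G =
      (2 : ℝ)⁻¹ • (U - (a / 2)⁻¹ • F) + (2 : ℝ)⁻¹ • (U - (b / 2)⁻¹ • G) := by
    ext i; simp only [Pi.sub_apply, Pi.add_apply, Pi.smul_apply, smul_eq_mul]; field_simp; ring
  rw [this]
  exact add_mem_admissibleSet (smul_mem_admissibleSet (by norm_num) hF)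
    (smul_mem_admissibleSet (by norm_num) hG)

theorem quadratic_pos_of_le {a b w l μ : ℝ} (ha : 0 ≤ a) (hb : 0 ≤ b) (hw : w ^ 2 ≤ 1)
    (hl : l < w) (hql : 0 < a * (w - l) ^ 2 - b * (1 - l ^ 2)) (hμ : μ ≤ l) :
    0 < a * (w - μ) ^ 2 - b * (1 - μ ^ 2) := by
  -- linear interpolation of the convex quadratic between `μ` and `w`, evaluated at `l`
  have hinterp : (a * (w - l) ^ 2 - b * (1 - l ^ 2)) * (w - μ) =
      (a * (w - μ) ^ 2 - b * (1 - μ ^ 2)) * (w - l) - b * (1 - w ^ 2) * (l - μ) -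
        (a + b) * (w - l) * (l - μ) * (w - μ) := by
    ring
  by_contra! hqμ
  nlinarith [mul_pos hql (by linarith : 0 < w - μ),
    mul_nonpos_of_nonpos_of_nonneg hqμ (by linarith : 0 ≤ w - l),
    mul_nonneg (mul_nonneg hb (by linarith : 0 ≤ 1 - w ^ 2)) (by linarith : 0 ≤ l - μ),
    mul_nonneg (mul_nonneg (mul_nonneg (by linarith : 0 ≤ a + b) (by linarith : 0 ≤ w - l))
      (by linarith : 0 ≤ l - μ)) (by linarith : 0 ≤ w - μ)]

noncomputable def leftAcousticSpeed (w v c : ℝ) : ℝ :=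
  (w * (1 - c ^ 2) - c * √(1 - (w ^ 2 + v ^ 2)) * √(1 - w ^ 2 - c ^ 2 * v ^ 2)) /
    (1 - c ^ 2 * (w ^ 2 + v ^ 2))

theorem exists_sub_leftAcousticSpeed_eq {w v c : ℝ} (hc1 : c ^ 2 < 1)
    (hwv : w ^ 2 + v ^ 2 < 1) :
    ∃ k > 0, w - leftAcousticSpeed w v c = c * √(1 - (w ^ 2 + v ^ 2)) * k ∧
    1 - leftAcousticSpeed w v c ^ 2 = (1 - c ^ 2) * k ^ 2 := by
  set g := √(1 - (w ^ 2 + v ^ 2))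
  set σ := √(1 - w ^ 2 - c ^ 2 * v ^ 2)
  set d := 1 - c ^ 2 * (w ^ 2 + v ^ 2)
  have hg2 : g ^ 2 = 1 - (w ^ 2 + v ^ 2) := Real.sq_sqrt (by linarith)
  have hσarg : 0 < 1 - w ^ 2 - c ^ 2 * v ^ 2 := by nlinarith [sq_nonneg v]
  have hσ2 : σ ^ 2 = 1 - w ^ 2 - c ^ 2 * v ^ 2 := Real.sq_sqrt hσarg.le
  have hd : 0 < d := by nlinarith [sq_nonneg w, sq_nonneg v]
  -- `σ² - (w c g)² = (1 - w²) d > 0`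
  have hσw : 0 < w * c * g + σ := by
    have hσ : 0 < σ := Real.sqrt_pos.2 hσarg
    nlinarith [sq_nonneg v, sq_nonneg (w * c * g), mul_pos (by nlinarith : 0 < 1 - w ^ 2) hd]
  have hL : leftAcousticSpeed w v c = (w * (1 - c ^ 2) - c * g * σ) / d := rfl
  refine ⟨(w * c * g + σ) / d, by positivity, ?_, ?_⟩
  · rw [hL]
    field_simp
    linear_combination (-(w * c ^ 2)) * hg2
  · have key :
        d ^ 2 - (w * (1 - c ^ 2) - c * g * σ) ^ 2 = (1 - c ^ 2) * (w * c * g + σ) ^ 2 := by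
      linear_combination (-(c ^ 2 * (1 - (w ^ 2 + v ^ 2))) - (1 - c ^ 2)) * hσ2 +
        (-(c ^ 2 * σ ^ 2) - (1 - c ^ 2) * w ^ 2 * c ^ 2) * hg2
    rw [hL]
    field_simp
    linear_combination key

theorem leftAcousticSpeed_lt {w v c : ℝ} (hc : 0 < c) (hc1 : c ^ 2 < 1)
    (hwv : w ^ 2 + v ^ 2 < 1) : leftAcousticSpeed w v c < w := by
  obtain ⟨k, hk, hsub, -⟩ := exists_sub_leftAcousticSpeed_eq (v := v) hc1 hwv
  have hg : 0 < √(1 - (w ^ 2 + v ^ 2)) := Real.sqrt_pos.2 (by linarith)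
  nlinarith [mul_pos (mul_pos hc hg) hk]

theorem quadratic_pos_at_leftAcousticSpeed {w v c a b : ℝ} (hc1 : c ^ 2 < 1)
    (hwv : w ^ 2 + v ^ 2 < 1) (hab : b * (1 - c ^ 2) < a * c ^ 2 * (1 - (w ^ 2 + v ^ 2))) :
    0 < a * (w - leftAcousticSpeed w v c) ^ 2 - b * (1 - leftAcousticSpeed w v c ^ 2) := by
  obtain ⟨k, hk, hsub, hone⟩ := exists_sub_leftAcousticSpeed_eq (v := v) hc1 hwv
  have hg2 : √(1 - (w ^ 2 + v ^ 2)) ^ 2 = 1 - (w ^ 2 + v ^ 2) := Real.sq_sqrt (by linarith)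
  rw [hsub, hone]
  have : a * (c * √(1 - (w ^ 2 + v ^ 2)) * k) ^ 2 - b * ((1 - c ^ 2) * k ^ 2) =
      k ^ 2 * (a * c ^ 2 * (1 - (w ^ 2 + v ^ 2)) - b * (1 - c ^ 2)) := by
    linear_combination a * c ^ 2 * k ^ 2 * hg2
  rw [this]
  exact mul_pos (by positivity) (by linarith)

theorem quadratic_pos_of_le_leftAcousticSpeed {w v c a b μ : ℝ} (hc : 0 < c) (hc1 : c ^ 2 < 1)
    (hwv : w ^ 2 + v ^ 2 < 1) (hb : 0 ≤ b)
    (hab : b * (1 - c ^ 2) < a * c ^ 2 * (1 - (w ^ 2 + v ^ 2)))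
    (hμ : μ ≤ leftAcousticSpeed w v c) :
    0 < a * (w - μ) ^ 2 - b * (1 - μ ^ 2) := by
  have ha : 0 ≤ a := by
    by_contra! ha
    nlinarith [mul_nonneg hb (by linarith : (0:ℝ) ≤ 1 - c ^ 2),
      mul_pos (pow_pos hc 2) (by linarith : 0 < 1 - (w ^ 2 + v ^ 2))]
  exact quadratic_pos_of_le ha hb (by nlinarith [sq_nonneg v]) (leftAcousticSpeed_lt hc hc1 hwv)
    (quadratic_pos_at_leftAcousticSpeed hc1 hwv hab) hμ

theorem quadratic_pos_of_neg_leftAcousticSpeed_neg_le {w v c a b μ : ℝ} (hc : 0 < c)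
    (hc1 : c ^ 2 < 1) (hwv : w ^ 2 + v ^ 2 < 1) (hb : 0 ≤ b)
    (hab : b * (1 - c ^ 2) < a * c ^ 2 * (1 - (w ^ 2 + v ^ 2)))
    (hμ : -leftAcousticSpeed (-w) v c ≤ μ) :
    0 < a * (w - μ) ^ 2 - b * (1 - μ ^ 2) := by
  have := quadratic_pos_of_le_leftAcousticSpeed (w := -w) (v := v) (a := a) (μ := -μ) hc hc1
    (by rwa [neg_sq]) hb (by rwa [neg_sq]) (by linarith)
  linear_combination this

namespace RHDState

variable {Γ : ℝ} (s : RHDState)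

noncomputable def κ (Γ : ℝ) (s : RHDState) : ℝ :=
  s.lorentz ^ 2 * ((s.ρ * s.enth Γ) ^ 2 - 2 * (s.ρ * s.enth Γ) * s.p - s.ρ ^ 2)

theorem lorentz_sq_mul : s.lorentz ^ 2 * (1 - (s.u1 ^ 2 + s.u2 ^ 2)) = 1 := by
  have h : 0 < 1 - (s.u1 ^ 2 + s.u2 ^ 2) := by linarith [s.hu]
  rw [lorentz, div_pow, Real.sq_sqrt h.le]
  field_simp

theorem enth_sub_one (hΓ1 : 1 < Γ) : (Γ - 1) * (s.ρ * (s.enth Γ - 1)) = Γ * s.p := by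
  have := s.hρ
  have : Γ - 1 ≠ 0 := by linarith
  rw [enth]
  field_simp
  ring

theorem p_lt_rho_mul_enth (hΓ1 : 1 < Γ) : s.p < s.ρ * s.enth Γ := by
  have := s.hρ; have := s.hp
  nlinarith [s.enth_sub_one hΓ1]

theorem cs_sq (hΓ1 : 1 < Γ) : s.cs Γ ^ 2 = Γ * s.p / (s.ρ * s.enth Γ) := by
  have := s.hρ; have := s.hp
  exact Real.sq_sqrt (div_nonneg (by nlinarith) (by nlinarith [s.p_lt_rho_mul_enth hΓ1]))

theorem cs_pos (hΓ1 : 1 < Γ) : 0 < s.cs Γ := by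
  have := s.hρ; have := s.hp
  exact Real.sqrt_pos.2 (div_pos (by nlinarith) (by nlinarith [s.p_lt_rho_mul_enth hΓ1]))

theorem cs_sq_lt_one (hΓ1 : 1 < Γ) (hΓ2 : Γ ≤ 2) : s.cs Γ ^ 2 < 1 := by
  have := s.hρ; have := s.hp
  rw [s.cs_sq hΓ1, div_lt_one (by nlinarith [s.p_lt_rho_mul_enth hΓ1])]
  nlinarith [s.enth_sub_one hΓ1, mul_nonneg (mul_nonneg (by linarith : (0:ℝ) ≤ Γ) s.hp.le)
    (by linarith : (0:ℝ) ≤ 2 - Γ)]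

theorem p_sq_mul_one_sub_cs_sq_lt (hΓ1 : 1 < Γ) (hΓ2 : Γ ≤ 2) :
    s.p ^ 2 * (1 - s.cs Γ ^ 2) < s.κ Γ * s.cs Γ ^ 2 * (1 - (s.u1 ^ 2 + s.u2 ^ 2)) := by
  have := s.hρ; have := s.hp
  have hH := s.p_lt_rho_mul_enth hΓ1
  have hrel := s.enth_sub_one hΓ1
  set H := s.ρ * s.enth Γ
  have hκ : s.κ Γ * s.cs Γ ^ 2 * (1 - (s.u1 ^ 2 + s.u2 ^ 2)) =
      (H ^ 2 - 2 * H * s.p - s.ρ ^ 2) * (Γ * s.p / H) := by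
    rw [κ, s.cs_sq hΓ1]
    linear_combination (H ^ 2 - 2 * H * s.p - s.ρ ^ 2) * (Γ * s.p / H) * s.lorentz_sq_mul
  -- `x = H - ρ` satisfies `(Γ - 1) x = Γ p`; the factor `2 - Γ ≥ 0` is where `Γ ≤ 2` enters
  have hgap : Γ * (Γ * (H ^ 2 - 2 * H * s.p - s.ρ ^ 2) - s.p * (H - Γ * s.p)) =
      (H - s.ρ) * (s.ρ * (Γ + 1) + (2 - Γ) * (H - s.ρ)) := by
    linear_combination (-(Γ * s.p + (Γ - 1) * (H - s.ρ) - (2 * Γ + 1) * H)) * hrel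
  have hx : 0 < H - s.ρ := by nlinarith
  have hpos : 0 < Γ * (H ^ 2 - 2 * H * s.p - s.ρ ^ 2) - s.p * (H - Γ * s.p) := by
    have : 0 < (H - s.ρ) * (s.ρ * (Γ + 1) + (2 - Γ) * (H - s.ρ)) := by
      apply mul_pos hx; nlinarith
    nlinarith
  have hdiff : (H ^ 2 - 2 * H * s.p - s.ρ ^ 2) * (Γ * s.p / H) - s.p ^ 2 * (1 - Γ * s.p / H) =
      s.p * (Γ * (H ^ 2 - 2 * H * s.p - s.ρ ^ 2) - s.p * (H - Γ * s.p)) / H := by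
    have : H ≠ 0 := by linarith
    field_simp
  rw [hκ, s.cs_sq hΓ1, ← sub_pos, hdiff]
  exact div_pos (mul_pos s.hp hpos) (by linarith)

theorem D_pos : 0 < s.D :=
  mul_pos s.hρ (one_div_pos.2 (Real.sqrt_pos.2 (by linarith [s.hu])))

theorem En_pos (hΓ1 : 1 < Γ) : 0 < s.En Γ := by
  have := s.hρ
  have hγ : 1 ≤ s.lorentz ^ 2 := by
    nlinarith [s.lorentz_sq_mul, sq_nonneg s.u1, sq_nonneg s.u2, sq_nonneg s.lorentz]
  have hH := s.p_lt_rho_mul_enth hΓ1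
  rw [En]
  nlinarith [mul_nonneg (by linarith [s.hp] : 0 ≤ s.ρ * s.enth Γ)
    (by linarith : 0 ≤ s.lorentz ^ 2 - 1)]

theorem minkowskiForm_Fx_sub_smul_U (μ : ℝ) :
    minkowskiForm (s.Fx Γ - μ • s.U Γ) = s.κ Γ * (s.u1 - μ) ^ 2 - s.p ^ 2 * (1 - μ ^ 2) := by
  simp only [minkowskiForm, Fx, U, D, m1, m2, En, κ, Pi.sub_apply, Pi.smul_apply, smul_eq_mul,
    Matrix.cons_val, Matrix.cons_val_zero, Matrix.cons_val_one, sub_add_cancel]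
  linear_combination (s.ρ * s.enth Γ) ^ 2 * s.lorentz ^ 2 * (s.u1 - μ) ^ 2 * s.lorentz_sq_mul

theorem minkowskiForm_Fy_sub_smul_U (μ : ℝ) :
    minkowskiForm (s.Fy Γ - μ • s.U Γ) = s.κ Γ * (s.u2 - μ) ^ 2 - s.p ^ 2 * (1 - μ ^ 2) := by
  simp only [minkowskiForm, Fy, U, D, m1, m2, En, κ, Pi.sub_apply, Pi.smul_apply, smul_eq_mul,
    Matrix.cons_val, Matrix.cons_val_zero, Matrix.cons_val_one, sub_add_cancel]
  linear_combination (s.ρ * s.enth Γ) ^ 2 * s.lorentz ^ 2 * (s.u2 - μ) ^ 2 * s.lorentz_sq_mul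

theorem lamX1_eq : s.lamX1 Γ = leftAcousticSpeed s.u1 s.u2 (s.cs Γ) := by
  simp only [lamX1, leftAcousticSpeed, lorentz, one_div, div_inv_eq_mul]

theorem lamX4_eq : s.lamX4 Γ = -leftAcousticSpeed (-s.u1) s.u2 (s.cs Γ) := by
  simp only [lamX4, leftAcousticSpeed, lorentz, one_div, div_inv_eq_mul, neg_sq]
  ring

theorem lamY1_eq : s.lamY1 Γ = leftAcousticSpeed s.u2 s.u1 (s.cs Γ) := by
  simp only [lamY1, leftAcousticSpeed, lorentz, one_div, div_inv_eq_mul, add_comm (s.u2 ^ 2)]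

theorem lamY4_eq : s.lamY4 Γ = -leftAcousticSpeed (-s.u2) s.u1 (s.cs Γ) := by
  simp only [lamY4, leftAcousticSpeed, lorentz, one_div, div_inv_eq_mul, neg_sq,
    add_comm (s.u2 ^ 2)]
  ring

theorem Fx_sub_smul_U_mem (hΓ1 : 1 < Γ) (hΓ2 : Γ ≤ 2) {ν : ℝ} (hν : ν ≤ s.lamX1 Γ) :
    s.Fx Γ - ν • s.U Γ ∈ admissibleSet := by
  have hc := s.cs_pos hΓ1
  have hc1 := s.cs_sq_lt_one hΓ1 hΓ2
  rw [lamX1_eq] at hν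
  refine sub_smul_mem_admissibleSet (s.En_pos hΓ1) (fun μ hμ => ?_) ?_
  · rw [minkowskiForm_Fx_sub_smul_U]
    exact quadratic_pos_of_le_leftAcousticSpeed hc hc1 s.hu (sq_nonneg _)
      (s.p_sq_mul_one_sub_cs_sq_lt hΓ1 hΓ2) (hμ.trans hν)
  · have := leftAcousticSpeed_lt hc hc1 s.hu
    show 0 < s.D * s.u1 - ν * s.D
    nlinarith [s.D_pos]

theorem smul_U_sub_Fx_mem (hΓ1 : 1 < Γ) (hΓ2 : Γ ≤ 2) {ν : ℝ} (hν : s.lamX4 Γ ≤ ν) :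
    ν • s.U Γ - s.Fx Γ ∈ admissibleSet := by
  have hc := s.cs_pos hΓ1
  have hc1 := s.cs_sq_lt_one hΓ1 hΓ2
  have hu : (-s.u1) ^ 2 + s.u2 ^ 2 < 1 := by rw [neg_sq]; exact s.hu
  rw [lamX4_eq] at hν
  refine smul_sub_mem_admissibleSet (s.En_pos hΓ1) (fun μ hμ => ?_) ?_
  · rw [minkowskiForm_Fx_sub_smul_U]
    exact quadratic_pos_of_neg_leftAcousticSpeed_neg_le hc hc1 s.hu (sq_nonneg _)
      (s.p_sq_mul_one_sub_cs_sq_lt hΓ1 hΓ2) (hν.trans hμ)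
  · have := leftAcousticSpeed_lt hc hc1 hu
    show 0 < ν * s.D - s.D * s.u1
    nlinarith [s.D_pos]

theorem Fy_sub_smul_U_mem (hΓ1 : 1 < Γ) (hΓ2 : Γ ≤ 2) {ν : ℝ} (hν : ν ≤ s.lamY1 Γ) :
    s.Fy Γ - ν • s.U Γ ∈ admissibleSet := by
  have hc := s.cs_pos hΓ1
  have hc1 := s.cs_sq_lt_one hΓ1 hΓ2
  have hu : s.u2 ^ 2 + s.u1 ^ 2 < 1 := by rw [add_comm]; exact s.hu
  rw [lamY1_eq] at hν
  refine sub_smul_mem_admissibleSet (s.En_pos hΓ1) (fun μ hμ => ?_) ?_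
  · rw [minkowskiForm_Fy_sub_smul_U]
    exact quadratic_pos_of_le_leftAcousticSpeed hc hc1 hu (sq_nonneg _)
      (by rw [add_comm]; exact s.p_sq_mul_one_sub_cs_sq_lt hΓ1 hΓ2) (hμ.trans hν)
  · have := leftAcousticSpeed_lt hc hc1 hu
    show 0 < s.D * s.u2 - ν * s.D
    nlinarith [s.D_pos]

theorem smul_U_sub_Fy_mem (hΓ1 : 1 < Γ) (hΓ2 : Γ ≤ 2) {ν : ℝ} (hν : s.lamY4 Γ ≤ ν) :
    ν • s.U Γ - s.Fy Γ ∈ admissibleSet := by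
  have hc := s.cs_pos hΓ1
  have hc1 := s.cs_sq_lt_one hΓ1 hΓ2
  have hu : s.u2 ^ 2 + s.u1 ^ 2 < 1 := by rw [add_comm]; exact s.hu
  have hu' : (-s.u2) ^ 2 + s.u1 ^ 2 < 1 := by rw [neg_sq]; exact hu
  rw [lamY4_eq] at hν
  refine smul_sub_mem_admissibleSet (s.En_pos hΓ1) (fun μ hμ => ?_) ?_
  · rw [minkowskiForm_Fy_sub_smul_U]
    exact quadratic_pos_of_neg_leftAcousticSpeed_neg_le hc hc1 hu (sq_nonneg _)
      (by rw [add_comm]; exact s.p_sq_mul_one_sub_cs_sq_lt hΓ1 hΓ2) (hν.trans hμ)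
  · have := leftAcousticSpeed_lt hc hc1 hu'
    show 0 < ν * s.D - s.D * s.u2
    nlinarith [s.D_pos]

end RHDState

theorem H_states_admissible_general (Γ : ℝ) (hΓ1 : 1 < Γ) (hΓ2 : Γ ≤ 2)
    (sLD sRD sLU sRU : RHDState)
    (SL SR SD SU : ℝ)
    (hSL : SL ≤ 2 * sLD.lamX1 Γ ∧ SL ≤ 2 * sRD.lamX1 Γ ∧
           SL ≤ 2 * sLU.lamX1 Γ ∧ SL ≤ 2 * sRU.lamX1 Γ)
    (hSR : SR ≥ 2 * sLD.lamX4 Γ ∧ SR ≥ 2 * sRD.lamX4 Γ ∧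
           SR ≥ 2 * sLU.lamX4 Γ ∧ SR ≥ 2 * sRU.lamX4 Γ)
    (hSD : SD ≤ 2 * sLD.lamY1 Γ ∧ SD ≤ 2 * sRD.lamY1 Γ ∧
           SD ≤ 2 * sLU.lamY1 Γ ∧ SD ≤ 2 * sRU.lamY1 Γ)
    (hSU : SU ≥ 2 * sLD.lamY4 Γ ∧ SU ≥ 2 * sRD.lamY4 Γ ∧
           SU ≥ 2 * sLU.lamY4 Γ ∧ SU ≥ 2 * sRU.lamY4 Γ)
    (hL0 : SL < 0) (hR0 : 0 < SR) (hD0 : SD < 0) (hU0 : 0 < SU) :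
    (sLD.U Γ - SL⁻¹ • sLD.Fx Γ - SD⁻¹ • sLD.Fy Γ) ∈ admissibleSet ∧
    (sRD.U Γ - SR⁻¹ • sRD.Fx Γ - SD⁻¹ • sRD.Fy Γ) ∈ admissibleSet ∧
    (sLU.U Γ - SL⁻¹ • sLU.Fx Γ - SU⁻¹ • sLU.Fy Γ) ∈ admissibleSet ∧
    (sRU.U Γ - SR⁻¹ • sRU.Fx Γ - SU⁻¹ • sRU.Fy Γ) ∈ admissibleSet := by
  have hL : ∀ s : RHDState, SL ≤ 2 * s.lamX1 Γ → s.U Γ - (SL / 2)⁻¹ • s.Fx Γ ∈ admissibleSet :=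
    fun s h => sub_inv_smul_mem_admissibleSet_of_neg (by linarith)
      (s.Fx_sub_smul_U_mem hΓ1 hΓ2 (by linarith))
  have hR : ∀ s : RHDState, SR ≥ 2 * s.lamX4 Γ → s.U Γ - (SR / 2)⁻¹ • s.Fx Γ ∈ admissibleSet :=
    fun s h => sub_inv_smul_mem_admissibleSet_of_pos (by linarith)
      (s.smul_U_sub_Fx_mem hΓ1 hΓ2 (by linarith))
  have hD : ∀ s : RHDState, SD ≤ 2 * s.lamY1 Γ → s.U Γ - (SD / 2)⁻¹ • s.Fy Γ ∈ admissibleSet :=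
    fun s h => sub_inv_smul_mem_admissibleSet_of_neg (by linarith)
      (s.Fy_sub_smul_U_mem hΓ1 hΓ2 (by linarith))
  have hU : ∀ s : RHDState, SU ≥ 2 * s.lamY4 Γ → s.U Γ - (SU / 2)⁻¹ • s.Fy Γ ∈ admissibleSet :=
    fun s h => sub_inv_smul_mem_admissibleSet_of_pos (by linarith)
      (s.smul_U_sub_Fy_mem hΓ1 hΓ2 (by linarith))
  exact ⟨sub_inv_smul_sub_inv_smul_mem_admissibleSet hL0.ne hD0.ne (hL _ hSL.1) (hD _ hSD.1),
    sub_inv_smul_sub_inv_smul_mem_admissibleSet hR0.ne' hD0.ne (hR _ hSR.2.1) (hD _ hSD.2.1),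
    sub_inv_smul_sub_inv_smul_mem_admissibleSet hL0.ne hU0.ne' (hL _ hSL.2.2.1) (hU _ hSU.2.2.1),
    sub_inv_smul_sub_inv_smul_mem_admissibleSet hR0.ne' hU0.ne' (hR _ hSR.2.2.2) (hU _ hSU.2.2.2)⟩

/-- If the four corner states are admissible and the wave speeds satisfy
`S_L ≤ 2λ_A^{(1)}`, `S_R ≥ 2λ_A^{(4)}`, `S_D ≤ 2λ_B^{(1)}`, `S_U ≥ 2λ_B^{(4)}`
at each of the four states, with `S_L < 0 < S_R` and `S_D < 0 < S_U`, then each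
of the four `H`-states `H_XY = U_XY - F(U_XY)/S_X - G(U_XY)/S_Y` is
admissible. -/
theorem H_states_admissible (Γ : ℝ) (hΓ1 : 1 < Γ) (hΓ2 : Γ ≤ 2)
    (sLD sRD sLU sRU : RHDState)
    (hLD : sLD.U Γ ∈ admissibleSet) (hRD : sRD.U Γ ∈ admissibleSet)
    (hLU : sLU.U Γ ∈ admissibleSet) (hRU : sRU.U Γ ∈ admissibleSet)
    (SL SR SD SU : ℝ)
    (hSL : SL ≤ 2 * sLD.lamX1 Γ ∧ SL ≤ 2 * sRD.lamX1 Γ ∧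
           SL ≤ 2 * sLU.lamX1 Γ ∧ SL ≤ 2 * sRU.lamX1 Γ)
    (hSR : SR ≥ 2 * sLD.lamX4 Γ ∧ SR ≥ 2 * sRD.lamX4 Γ ∧
           SR ≥ 2 * sLU.lamX4 Γ ∧ SR ≥ 2 * sRU.lamX4 Γ)
    (hSD : SD ≤ 2 * sLD.lamY1 Γ ∧ SD ≤ 2 * sRD.lamY1 Γ ∧
           SD ≤ 2 * sLU.lamY1 Γ ∧ SD ≤ 2 * sRU.lamY1 Γ)
    (hSU : SU ≥ 2 * sLD.lamY4 Γ ∧ SU ≥ 2 * sRD.lamY4 Γ ∧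
           SU ≥ 2 * sLU.lamY4 Γ ∧ SU ≥ 2 * sRU.lamY4 Γ)
    (hL0 : SL < 0) (hR0 : 0 < SR) (hD0 : SD < 0) (hU0 : 0 < SU) :
    (sLD.U Γ - SL⁻¹ • sLD.Fx Γ - SD⁻¹ • sLD.Fy Γ) ∈ admissibleSet ∧
    (sRD.U Γ - SR⁻¹ • sRD.Fx Γ - SD⁻¹ • sRD.Fy Γ) ∈ admissibleSet ∧
    (sLU.U Γ - SL⁻¹ • sLU.Fx Γ - SU⁻¹ • sLU.Fy Γ) ∈ admissibleSet ∧
    (sRU.U Γ - SR⁻¹ • sRU.Fx Γ - SU⁻¹ • sRU.Fy Γ) ∈ admissibleSet :=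
  H_states_admissible_general Γ hΓ1 hΓ2 sLD sRD sLU sRU SL SR SD SU hSL hSR hSD hSU hL0 hR0 hD0 hU0
end

section
/- The 2D HLL intermediate state U* = [S_R S_U U_RU + S_L S_D U_LD - S_R S_D U_RD - S_L S_U U_LU - S_U(F_RU - F_LU) + S_D(F_RD - F_LD) - S_R(G_RU - G_RD) + S_L(G_LU - G_LD)] / ((S_R - S_L)(S_U - S_D)) can be written as the convex combination U* = (1/𝔅)[S_L S_D H_LD - S_R S_D H_RD - S_L S_U H_LU + S_R S_U H_RU], where 𝔅 = (S_R-S_L)(S_U-S_D), H_XY = U_XY - F(U_XY)/S_X' - G(U_XY)/S_Y' with appropriate signs (X' ∈ {L,R}, Y' ∈ {D,U}), and all four coefficients S_L S_D/𝔅, -S_R S_D/𝔅, -S_L S_U/𝔅, S_R S_U/𝔅 are positive and sum to 1, provided S_L < 0 < S_R and S_D < 0 < S_U. -/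
/-!
Multiplying `H_XY = U_XY - S_X⁻¹ F_XY - S_Y⁻¹ G_XY` by `S_X S_Y` clears the denominators, and the
four resulting corner terms, with signs `+ - - +`, add up to the numerator of `U*`. The weights
`S_X S_Y` with those signs are positive because each `S_L, S_D` is negative and each `S_R, S_U`
positive, and they sum to `S_L S_D - S_R S_D - S_L S_U + S_R S_U = (S_R - S_L)(S_U - S_D) = 𝔅`.
-/

lemma mul_smul_sub_inv_smul_sub_inv_smul {𝕜 V : Type*} [Field 𝕜] [AddCommGroup V] [Module 𝕜 V]
    {a b : 𝕜} (ha : a ≠ 0) (hb : b ≠ 0) (U F G : V) :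
    (a * b) • (U - a⁻¹ • F - b⁻¹ • G) = (a * b) • U - b • F - a • G := by
  match_scalars <;> field_simp

lemma bilinear_weights_sum_div_eq_one {𝕜 : Type*} [Field 𝕜] {SL SR SD SU B : 𝕜}
    (hB : B = (SR - SL) * (SU - SD)) (hB0 : B ≠ 0) :
    SL * SD / B + -(SR * SD) / B + -(SL * SU) / B + SR * SU / B = 1 := by
  rw [← add_div, ← add_div, ← add_div, div_eq_one_iff_eq hB0, hB]
  ring

/-- The 2D HLL intermediate state `U*` is a convex combination of the four
`H`-states `H_XY = U_XY - F_XY/S_X - G_XY/S_Y`: with `𝔅 = (S_R-S_L)(S_U-S_D)`,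
`U* = (1/𝔅)(S_L S_D H_LD - S_R S_D H_RD - S_L S_U H_LU + S_R S_U H_RU)`, and
the four coefficients are positive and sum to `1`, provided
`S_L < 0 < S_R`, `S_D < 0 < S_U`. -/
theorem intermediate_state_convex_comb {V : Type*} [AddCommGroup V] [Module ℝ V]
    (ULD URD ULU URU FLD FRD FLU FRU GLD GRD GLU GRU : V)
    (SL SR SD SU : ℝ) (hL0 : SL < 0) (hR0 : 0 < SR) (hD0 : SD < 0) (hU0 : 0 < SU)
    (B : ℝ) (hB : B = (SR - SL) * (SU - SD))
    (HLD HRD HLU HRU Ustar : V)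
    (hHLD : HLD = ULD - SL⁻¹ • FLD - SD⁻¹ • GLD)
    (hHRD : HRD = URD - SR⁻¹ • FRD - SD⁻¹ • GRD)
    (hHLU : HLU = ULU - SL⁻¹ • FLU - SU⁻¹ • GLU)
    (hHRU : HRU = URU - SR⁻¹ • FRU - SU⁻¹ • GRU)
    (hUstar : Ustar = ((SR - SL) * (SU - SD))⁻¹ •
      ((SR * SU) • URU + (SL * SD) • ULD - (SR * SD) • URD - (SL * SU) • ULU -
        SU • (FRU - FLU) + SD • (FRD - FLD) -
        SR • (GRU - GRD) + SL • (GLU - GLD))) :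
    Ustar = B⁻¹ • ((SL * SD) • HLD - (SR * SD) • HRD -
        (SL * SU) • HLU + (SR * SU) • HRU) ∧
      0 < SL * SD / B ∧ 0 < -(SR * SD) / B ∧ 0 < -(SL * SU) / B ∧
      0 < SR * SU / B ∧
      SL * SD / B + -(SR * SD) / B + -(SL * SU) / B + SR * SU / B = 1 := by
  have hBpos : 0 < B := hB ▸ mul_pos (sub_pos.2 (hL0.trans hR0)) (sub_pos.2 (hD0.trans hU0))
  refine ⟨?_, div_pos (mul_pos_of_neg_of_neg hL0 hD0) hBpos,
    div_pos (neg_pos.2 (mul_neg_of_pos_of_neg hR0 hD0)) hBpos,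
    div_pos (neg_pos.2 (mul_neg_of_neg_of_pos hL0 hU0)) hBpos,
    div_pos (mul_pos hR0 hU0) hBpos, bilinear_weights_sum_div_eq_one hB hBpos.ne'⟩
  rw [hUstar, hB, hHLD, hHRD, hHLU, hHRU,
    mul_smul_sub_inv_smul_sub_inv_smul hL0.ne hD0.ne,
    mul_smul_sub_inv_smul_sub_inv_smul hR0.ne' hD0.ne,
    mul_smul_sub_inv_smul_sub_inv_smul hL0.ne hU0.ne',
    mul_smul_sub_inv_smul_sub_inv_smul hR0.ne' hU0.ne']
  module
end
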